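/- arXiv:1912.04945 — 13 statements merged into one kernel-verified Lean document; each statement's English description precedes it below -/
import Mathlib

section
/- For all positive integers n and p, A_{n,p} = n\,A_{n,p-1} - B_{n-1,p-1}, where A_{n,p} = \sum_{k=1}^n k^p/((n+k-1)!(n-k)!) and B_{n,p} = \sum_{k=1}^n k^p/((n+k)!(n-k)!). -/
theorem A_rec (n p : ℕ) (hn : 1 ≤ n) (hp : 1 ≤ p) :
    ∑ k ∈ Finset.Icc 1 n,
      (k : ℚ) ^ p / ((Nat.factorial (n + k - 1)) * (Nat.factorial (n - k)))
    = (n : ℚ) * ∑ k ∈ Finset.Icc 1 n,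
        (k : ℚ) ^ (p - 1) / ((Nat.factorial (n + k - 1)) * (Nat.factorial (n - k)))
      - ∑ k ∈ Finset.Icc 1 (n - 1),
        (k : ℚ) ^ (p - 1) / ((Nat.factorial (n - 1 + k)) * (Nat.factorial (n - 1 - k))) := by
  obtain ⟨m, rfl⟩ : ∃ m, n = m + 1 := ⟨n - 1, by omega⟩
  obtain ⟨q, rfl⟩ : ∃ q, p = q + 1 := ⟨p - 1, by omega⟩
  have hsimp : ∀ k, m + 1 + k - 1 = m + k := fun k => by omega
  simp only [hsimp, Nat.add_sub_cancel, Nat.succ_sub_one]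
  rw [eq_sub_iff_add_eq, ← eq_sub_iff_add_eq', Finset.mul_sum,
    ← Finset.sum_sub_distrib, Finset.sum_Icc_succ_top (by omega : 1 ≤ m + 1)]
  have htop : (↑(m+1) : ℚ) * ((↑(m+1)) ^ q / (↑(Nat.factorial (m + (m+1))) * ↑(Nat.factorial (m + 1 - (m+1)))))
      - (↑(m+1) : ℚ) ^ (q+1) / (↑(Nat.factorial (m + (m+1))) * ↑(Nat.factorial (m + 1 - (m+1)))) = 0 := by
    rw [pow_succ]
    ring
  rw [htop, add_zero]
  apply Finset.sum_congr rfl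
  intro k hk
  simp only [Finset.mem_Icc] at hk
  have hk2 : k ≤ m := hk.2
  have h1 : m + 1 - k = (m - k) + 1 := by omega
  rw [h1, Nat.factorial_succ]
  have hf1 : (Nat.factorial (m + k) : ℚ) ≠ 0 := Nat.cast_ne_zero.mpr (Nat.factorial_ne_zero _)
  have hf2 : (Nat.factorial (m - k) : ℚ) ≠ 0 := Nat.cast_ne_zero.mpr (Nat.factorial_ne_zero _)
  have h2 : ((m - k : ℕ) : ℚ) = (m : ℚ) - k := by
    push_cast [hk2]; ring
  have h3 : ((m - k : ℕ) : ℚ) + 1 ≠ 0 := by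
    positivity
  push_cast [h2] at h3 ⊢
  field_simp
  ring
end

section
/- For all positive integers n and p, B_{n,p} = A_{n,p-1} - n\,B_{n,p-1}, where A and B are as defined. -/
theorem B_rec (n p : ℕ) (hn : 1 ≤ n) (hp : 1 ≤ p) :
    ∑ k ∈ Finset.Icc 1 n,
      (k : ℚ) ^ p / ((Nat.factorial (n + k)) * (Nat.factorial (n - k)))
    = ∑ k ∈ Finset.Icc 1 n,
        (k : ℚ) ^ (p - 1) / ((Nat.factorial (n + k - 1)) * (Nat.factorial (n - k)))
      - (n : ℚ) * ∑ k ∈ Finset.Icc 1 n,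
        (k : ℚ) ^ (p - 1) / ((Nat.factorial (n + k)) * (Nat.factorial (n - k))) := by
  rw [Finset.mul_sum, ← Finset.sum_sub_distrib]
  apply Finset.sum_congr rfl
  intro k hk
  obtain ⟨hk1, hk2⟩ := Finset.mem_Icc.mp hk
  have h1 : n + k - 1 + 1 = n + k := by omega
  have hfac : (Nat.factorial (n + k) : ℚ)
      = ((n : ℚ) + k) * Nat.factorial (n + k - 1) := by
    rw [← h1, Nat.factorial_succ]
    push_cast [h1]
    ring
  have hp1 : (k : ℚ) ^ p = (k : ℚ) ^ (p - 1) * k := by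
    rw [← pow_succ]
    congr 1
    omega
  have ha : (Nat.factorial (n + k - 1) : ℚ) ≠ 0 := by
    exact_mod_cast Nat.factorial_ne_zero _
  have hb : (Nat.factorial (n - k) : ℚ) ≠ 0 := by
    exact_mod_cast Nat.factorial_ne_zero _
  have hnk : ((n : ℚ) + k) ≠ 0 := by positivity
  rw [hfac, hp1]
  field_simp
  ring
end

section
/- For all positive integers n, \sum_{k=1}^n k/((n+k)!(n-k)!) = 1/(2\,n!\,(n-1)!). -/
theorem B_n_1 (n : ℕ) (hn : 1 ≤ n) :
    ∑ k ∈ Finset.Icc 1 n,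
      (k : ℚ) / ((Nat.factorial (n + k)) * (Nat.factorial (n - k)))
    = 1 / (2 * (Nat.factorial n : ℚ) * (Nat.factorial (n - 1) : ℚ)) := by
  obtain ⟨m, rfl⟩ : ∃ m, n = m + 1 := ⟨n - 1, (Nat.succ_pred_eq_of_pos hn).symm⟩
  set f : ℕ → ℚ := fun i => -(1 / ((Nat.factorial (m + 1 + i) : ℚ) * (Nat.factorial (m - i) : ℚ))) / 2 with hf
  have hstep : ∀ i ∈ Finset.range m,
      ((1 + i : ℕ) : ℚ) / ((Nat.factorial (m + 1 + (1 + i)) : ℚ) * (Nat.factorial (m + 1 - (1 + i)) : ℚ))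
        = f (i + 1) - f i := by
    intro i hi
    rw [Finset.mem_range] at hi
    obtain ⟨j, rfl⟩ : ∃ j, m = i + 1 + j := ⟨m - (i + 1), by omega⟩
    have e1 : i + 1 + j + 1 + (1 + i) = (2 * i + j + 3) := by ring
    have e2 : i + 1 + j + 1 - (1 + i) = j + 1 := by omega
    have e3 : i + 1 + j + 1 + (i + 1) = (2 * i + j + 3) := by ring
    have e4 : i + 1 + j - (i + 1) = j := by omega
    have e5 : i + 1 + j + 1 + i = 2 * i + j + 2 := by ring
    have e6 : i + 1 + j - i = j + 1 := by omega
    rw [hf]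
    simp only [e1, e2, e3, e4, e5, e6]
    have h1 : Nat.factorial (2 * i + j + 3) = (2 * i + j + 3) * Nat.factorial (2 * i + j + 2) :=
      Nat.factorial_succ _
    have h2 : Nat.factorial (j + 1) = (j + 1) * Nat.factorial j := Nat.factorial_succ _
    have p1 : (Nat.factorial (2 * i + j + 2) : ℚ) ≠ 0 := Nat.cast_ne_zero.mpr (Nat.factorial_ne_zero _)
    have p2 : (Nat.factorial j : ℚ) ≠ 0 := Nat.cast_ne_zero.mpr (Nat.factorial_ne_zero _)
    rw [h1, h2]
    push_cast
    field_simp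
    ring
  rw [← Finset.Ico_add_one_right_eq_Icc, Finset.sum_Ico_eq_sum_range]
  simp only [Nat.succ_sub_one, Nat.add_sub_cancel]
  rw [Finset.sum_range_succ]
  rw [Finset.sum_congr rfl hstep, Finset.sum_range_sub f]
  rw [hf]
  simp only [Nat.sub_self, Nat.sub_zero, Nat.add_zero, Nat.factorial_zero]
  have e7 : m + 1 + (1 + m) = 2 * m + 2 := by ring
  have e8 : m + 1 - (1 + m) = 0 := by omega
  have e9 : m + 1 + m = 2 * m + 1 := by ring
  have e10 : m + 1 - 1 = m := by omega
  rw [e7, e8, e9]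
  have h1 : Nat.factorial (2 * m + 2) = (2 * m + 2) * Nat.factorial (2 * m + 1) :=
    Nat.factorial_succ _
  have p1 : (Nat.factorial (2 * m + 1) : ℚ) ≠ 0 := Nat.cast_ne_zero.mpr (Nat.factorial_ne_zero _)
  have p2 : (Nat.factorial (m + 1) : ℚ) ≠ 0 := Nat.cast_ne_zero.mpr (Nat.factorial_ne_zero _)
  have p3 : (Nat.factorial m : ℚ) ≠ 0 := Nat.cast_ne_zero.mpr (Nat.factorial_ne_zero _)
  rw [h1, Nat.factorial_zero]
  push_cast
  field_simp
  ring
end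

section
/- For all positive integers n, \sum_{k=1}^n k^3/((n+k)!(n-k)!) = 1/(2\,(n-1)!^2). -/
noncomputable def Fb (n k : ℕ) : ℚ :=
  ((k : ℚ) ^ 3 - ((n : ℚ) - 1) * k ^ 2 - (n : ℚ) ^ 2) /
    (2 * (Nat.factorial (n + k)) * (Nat.factorial (n - k)))

lemma Fb_step (n i : ℕ) (h : i < n) :
    ((i + 1 : ℕ) : ℚ) ^ 3 /
      ((Nat.factorial (n + (i + 1))) * (Nat.factorial (n - (i + 1))))
    = Fb n (i + 1) - Fb n i := by
  have hA : ((Nat.factorial (n + (i + 1)) : ℚ)) =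
      ((n : ℚ) + i + 1) * (Nat.factorial (n + i)) := by
    rw [show n + (i + 1) = (n + i) + 1 from rfl, Nat.factorial_succ]
    push_cast; ring
  have hni : n - i = (n - (i + 1)) + 1 := by omega
  have hB : ((Nat.factorial (n - i) : ℚ)) =
      ((n : ℚ) - i) * (Nat.factorial (n - (i + 1))) := by
    rw [hni, Nat.factorial_succ]
    push_cast [Nat.cast_sub h]
    ring
  have hA0 : ((Nat.factorial (n + i) : ℚ)) ≠ 0 := by
    exact_mod_cast Nat.factorial_ne_zero _
  have hB0 : ((Nat.factorial (n - (i + 1)) : ℚ)) ≠ 0 := by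
    exact_mod_cast Nat.factorial_ne_zero _
  have h1 : ((n : ℚ) + i + 1) ≠ 0 := by positivity
  have h2 : ((n : ℚ) - i) ≠ 0 := by
    have : (i : ℚ) < n := by exact_mod_cast h
    linarith
  unfold Fb
  rw [hA, hB]
  push_cast
  field_simp
  ring

theorem B_n_3 (n : ℕ) (hn : 1 ≤ n) :
    ∑ k ∈ Finset.Icc 1 n,
      (k : ℚ) ^ 3 / ((Nat.factorial (n + k)) * (Nat.factorial (n - k)))
    = 1 / (2 * ((Nat.factorial (n - 1) : ℚ)) ^ 2) := by
  have hsum : ∑ k ∈ Finset.Icc 1 n,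
      (k : ℚ) ^ 3 / ((Nat.factorial (n + k)) * (Nat.factorial (n - k)))
      = Fb n n - Fb n 0 := by
    rw [← Finset.Ico_add_one_right_eq_Icc, Finset.sum_Ico_eq_sum_range]

    rw [← Finset.sum_range_sub (fun k => Fb n k) n]
    apply Finset.sum_congr rfl
    intro i hi
    rw [Finset.mem_range] at hi
    rw [show 1 + i = i + 1 from by ring]
    exact_mod_cast Fb_step n i hi
  rw [hsum]
  have hFn : Fb n n = 0 := by
    unfold Fb
    have : ((n : ℚ)) ^ 3 - ((n : ℚ) - 1) * n ^ 2 - (n : ℚ) ^ 2 = 0 := by ring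
    rw [this, zero_div]
  have hfact : ((Nat.factorial n : ℚ)) = (n : ℚ) * (Nat.factorial (n - 1)) := by
    conv_lhs => rw [show n = (n - 1) + 1 by omega]
    rw [Nat.factorial_succ]
    have : (((n - 1 : ℕ) + 1 : ℕ) : ℚ) = (n : ℚ) := by
      push_cast [Nat.cast_sub hn]; ring
    push_cast [Nat.cast_sub hn]; ring
  have hF0 : Fb n 0 = - (1 / (2 * ((Nat.factorial (n - 1) : ℚ)) ^ 2)) := by
    unfold Fb
    simp only [Nat.add_zero, Nat.sub_zero, Nat.cast_zero]
    rw [hfact]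
    have hn0 : (n : ℚ) ≠ 0 := by positivity
    have hf0 : ((Nat.factorial (n - 1) : ℚ)) ≠ 0 := by
      exact_mod_cast Nat.factorial_ne_zero _
    field_simp
    ring
  rw [hFn, hF0]
  ring
end

section
/- For all integers n \geq 2, \sum_{k=2}^n k(k-1)(2k-1)/((n+k-1)!(n-k)!) = 1/((n-1)!(n-2)!). -/
/-- Telescoping antidifference for the sum. -/
def Ftel (n k : ℕ) : ℚ :=
  -(((k : ℚ)) ^ 2 + (n : ℚ) - 1) * ((n - k : ℕ) : ℚ)
    / ((Nat.factorial (n + k - 1) : ℚ) * (Nat.factorial (n - k) : ℚ))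

lemma Ftel_step (j a : ℕ) :
    (((j : ℚ) + 2) * (((j : ℚ) + 2) - 1) * (2 * ((j : ℚ) + 2) - 1))
      / ((Nat.factorial (2 * j + a + 3) : ℚ) * (Nat.factorial a : ℚ))
    = Ftel (j + 2 + a) (j + 2) - Ftel (j + 2 + a) (j + 1) := by
  unfold Ftel
  have h1 : j + 2 + a + (j + 2) - 1 = 2 * j + a + 3 := by omega
  have h2 : j + 2 + a - (j + 2) = a := by omega
  have h3 : j + 2 + a + (j + 1) - 1 = 2 * j + a + 2 := by omega
  have h4 : j + 2 + a - (j + 1) = a + 1 := by omega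
  rw [h1, h2, h3, h4]
  have hf1 : (2 * j + a + 3) = (2 * j + a + 2) + 1 := by omega
  rw [hf1, Nat.factorial_succ (2 * j + a + 2), Nat.factorial_succ a]
  have hA : (Nat.factorial (2 * j + a + 2) : ℚ) ≠ 0 := by
    exact_mod_cast Nat.factorial_ne_zero _
  have hB : (Nat.factorial a : ℚ) ≠ 0 := by
    exact_mod_cast Nat.factorial_ne_zero _
  push_cast
  field_simp
  ring

theorem sum_kk1 (n : ℕ) (hn : 2 ≤ n) :
    ∑ k ∈ Finset.Icc 2 n,
      ((k : ℚ) * ((k : ℚ) - 1) * (2 * (k : ℚ) - 1))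
        / ((Nat.factorial (n + k - 1)) * (Nat.factorial (n - k)))
    = 1 / ((Nat.factorial (n - 1) : ℚ) * (Nat.factorial (n - 2) : ℚ)) := by
  have key : ∀ k ∈ Finset.Icc 2 n,
      ((k : ℚ) * ((k : ℚ) - 1) * (2 * (k : ℚ) - 1))
        / ((Nat.factorial (n + k - 1)) * (Nat.factorial (n - k)))
      = Ftel n k - Ftel n (k - 1) := by
    intro k hk
    simp only [Finset.mem_Icc] at hk
    obtain ⟨j, rfl⟩ : ∃ j, k = j + 2 := ⟨k - 2, by omega⟩
    obtain ⟨a, rfl⟩ : ∃ a, n = j + 2 + a := ⟨n - (j + 2), by omega⟩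
    have h1 : j + 2 + a + (j + 2) - 1 = 2 * j + a + 3 := by omega
    have h2 : j + 2 + a - (j + 2) = a := by omega
    have h3 : j + 2 - 1 = j + 1 := by omega
    rw [h1, h2, h3, ← Ftel_step j a]
    push_cast
    ring_nf
  rw [Finset.sum_congr rfl key]
  have tel : ∑ k ∈ Finset.Icc 2 n, (Ftel n k - Ftel n (k - 1))
      = Ftel n n - Ftel n 1 := by
    rw [← Finset.Ico_add_one_right_eq_Icc, Finset.sum_Ico_eq_sum_range]
    have h := Finset.sum_range_sub (fun i => Ftel n (i + 1)) (n + 1 - 2)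
    calc ∑ i ∈ Finset.range (n + 1 - 2), (Ftel n (2 + i) - Ftel n (2 + i - 1))
        = ∑ i ∈ Finset.range (n + 1 - 2), (Ftel n (i + 1 + 1) - Ftel n (i + 1)) := by
          refine Finset.sum_congr rfl fun i _ => ?_
          rw [show 2 + i - 1 = i + 1 from by omega, show 2 + i = i + 1 + 1 from by omega]
      _ = Ftel n (n + 1 - 2 + 1) - Ftel n (0 + 1) := h
      _ = Ftel n n - Ftel n 1 := by rw [show n + 1 - 2 + 1 = n from by omega]
  rw [tel]
  have hFn : Ftel n n = 0 := by
    unfold Ftel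
    simp [Nat.sub_self]
  have hF1 : Ftel n 1 = -(1 / ((Nat.factorial (n - 1) : ℚ) * (Nat.factorial (n - 2) : ℚ))) := by
    unfold Ftel
    obtain ⟨m, rfl⟩ : ∃ m, n = m + 2 := ⟨n - 2, by omega⟩
    have h1 : m + 2 + 1 - 1 = m + 2 := by omega
    have h2 : m + 2 - 1 = m + 1 := by omega
    have h3 : m + 2 - 2 = m := by omega
    rw [h1, h2, h3]
    rw [show m + 2 = (m + 1) + 1 from rfl, Nat.factorial_succ,
      show m + 1 = m + 1 from rfl, Nat.factorial_succ]
    have hA : (Nat.factorial m : ℚ) ≠ 0 := by exact_mod_cast Nat.factorial_ne_zero _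
    push_cast
    field_simp
    ring
  rw [hFn, hF1]
  ring
end

section
/- For all integers n \geq 2, \sum_{k=2}^n (k-1)k/((n+k-1)!(n-k)!) = 2^{2n-3}(n-1)/(2n-1)!. -/
open Finset

lemma sumA (m : ℕ) : ∑ j ∈ range (m+1), ((m.choose j : ℚ)) = 2^m := by
  exact_mod_cast congrArg (Nat.cast : ℕ → ℚ) (Nat.sum_range_choose m)

lemma sumB (m : ℕ) : ∑ j ∈ range (m+2), (j:ℚ) * ((m+1).choose j) = (m+1) * 2^m := by
  rw [Finset.sum_range_succ']
  have h : ∀ k : ℕ, ((k:ℚ)+1) * (((m+1).choose (k+1) : ℕ) : ℚ) = ((m:ℚ)+1) * (m.choose k : ℚ) := by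
    intro k
    have h1 : ((m+1) * m.choose k : ℕ) = ((m+1).choose (k+1) * (k+1) : ℕ) := Nat.add_one_mul_choose_eq m k
    have h2 := congrArg (Nat.cast : ℕ → ℚ) h1
    push_cast at h2
    linarith
  calc (∑ k ∈ range (m+1), ((k+1:ℕ):ℚ) * ((m+1).choose (k+1))) + ((0:ℕ):ℚ) * ((m+1).choose 0)
      = ∑ k ∈ range (m+1), ((m:ℚ)+1) * (m.choose k : ℚ) := by
        rw [Nat.cast_zero, zero_mul, add_zero]
        exact Finset.sum_congr rfl fun k _ => by push_cast; exact h k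
    _ = ((m:ℚ)+1) * 2^m := by rw [← Finset.mul_sum, sumA]

lemma sumC (m : ℕ) : ∑ j ∈ range (m+3), (j:ℚ) * ((j:ℚ)-1) * ((m+2).choose j) = (m+2)*(m+1) * 2^m := by
  rw [Finset.sum_range_succ']
  have h : ∀ k : ℕ, ((k+1:ℕ):ℚ) * (((k+1:ℕ):ℚ)-1) * ((m+2).choose (k+1)) = ((m:ℚ)+2) * ((k:ℚ) * ((m+1).choose k)) := by
    intro k
    have h1 : ((m+2) * (m+1).choose k : ℕ) = ((m+2).choose (k+1) * (k+1) : ℕ) := Nat.add_one_mul_choose_eq (m+1) k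
    have h2 := congrArg (Nat.cast : ℕ → ℚ) h1
    push_cast at h2 ⊢
    nlinarith [h2]
  calc (∑ k ∈ range (m+2), ((k+1:ℕ):ℚ) * (((k+1:ℕ):ℚ)-1) * ((m+2).choose (k+1))) + ((0:ℕ):ℚ) * (((0:ℕ):ℚ)-1) * ((m+2).choose 0)
      = ∑ k ∈ range (m+2), ((m:ℚ)+2) * ((k:ℚ) * ((m+1).choose k)) := by
        rw [Nat.cast_zero, zero_mul, zero_mul, add_zero]
        exact Finset.sum_congr rfl fun k _ => h k
    _ = ((m:ℚ)+2)*((m:ℚ)+1) * 2^m := by rw [← Finset.mul_sum, sumB]; ring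

theorem sum_k1k (n : ℕ) (hn : 2 ≤ n) :
    ∑ k ∈ Finset.Icc 2 n,
      (((k : ℚ) - 1) * (k : ℚ))
        / ((Nat.factorial (n + k - 1)) * (Nat.factorial (n - k)))
    = (2 : ℚ) ^ (2 * n - 3) * ((n : ℚ) - 1) / (Nat.factorial (2 * n - 1)) := by
  obtain ⟨t, rfl⟩ : ∃ t, n = t + 2 := ⟨n - 2, by omega⟩
  clear hn
  set g : ℕ → ℚ := fun j => ((t:ℚ)+2-j)*((t:ℚ)+1-j) * ((2*t+3).choose j) with hg
  -- full sum
  have hfull : ∑ j ∈ range (2*t+4), g j = 2^(2*t+1) * (2*(t:ℚ)+2) := by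
    have hpt : ∀ j : ℕ, g j = (j:ℚ)*((j:ℚ)-1)*((2*t+3).choose j)
        - (2*(t:ℚ)+2) * ((j:ℚ)*((2*t+3).choose j))
        + ((t:ℚ)+2)*((t:ℚ)+1) * ((2*t+3).choose j) := by
      intro j; rw [hg]; ring
    rw [Finset.sum_congr rfl fun j _ => hpt j]
    rw [Finset.sum_add_distrib, Finset.sum_sub_distrib, ← Finset.mul_sum, ← Finset.mul_sum]
    have hC := sumC (2*t+1)
    have hB := sumB (2*t+2)
    have hA := sumA (2*t+3)
    have e1 : 2*t+1+3 = 2*t+4 := by ring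
    have e2 : 2*t+1+2 = 2*t+3 := by ring
    have e3 : 2*t+2+2 = 2*t+4 := by ring
    have e4 : 2*t+2+1 = 2*t+3 := by ring
    have e5 : 2*t+3+1 = 2*t+4 := by ring
    rw [e1, e2] at hC
    rw [e3, e4] at hB
    rw [e5] at hA
    rw [hC, hB, hA]
    push_cast
    have : (2:ℚ)^(2*t+2) = 2*2^(2*t+1) := by ring
    rw [this]
    have : (2:ℚ)^(2*t+3) = 4*2^(2*t+1) := by ring
    rw [this]
    ring
  -- symmetry
  have hsym : ∑ j ∈ range (2*t+4), g j = 2 * ∑ j ∈ range (t+1), g j := by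
    have h1 := Finset.sum_range_add_sum_Ico g (show t+2 ≤ 2*t+4 by omega)
    have h2 := Finset.sum_Ico_reflect g 0 (show t+2 ≤ 2*t+3+1 by omega)
    have h3 : ∀ j ∈ range (t+2), g (2*t+3 - j) = g j := by
      intro j hj
      rw [Finset.mem_range] at hj
      rw [hg]
      simp only []
      rw [Nat.cast_sub (by omega : j ≤ 2*t+3)]
      rw [show (2*t+3).choose (2*t+3-j) = (2*t+3).choose j from
        Nat.choose_symm (by omega : j ≤ 2*t+3)]
      push_cast; ring
    have hmid : g (t+1) = 0 := by rw [hg]; push_cast; ring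
    have h4 : ∑ j ∈ Ico (t+2) (2*t+4), g j = ∑ j ∈ range (t+2), g j := by
      rw [show (2*t+3+1-(t+2)) = t+2 from by omega, show (2*t+3+1-0) = 2*t+4 from by omega] at h2
      rw [← h2, Nat.Ico_zero_eq_range]
      exact Finset.sum_congr rfl h3
    have h5 : ∑ j ∈ range (t+2), g j = ∑ j ∈ range (t+1), g j := by
      rw [Finset.sum_range_succ, hmid, add_zero]
    rw [← h1, h4, h5]; ring
  -- reindex original sum numerator
  have hreindex : ∑ k ∈ Finset.Icc 2 (t+2), ((k:ℚ)-1)*(k:ℚ)*((2*t+3).choose (t+2-k))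
      = ∑ j ∈ range (t+1), g j := by
    rw [show Finset.Icc 2 (t+2) = Finset.Ico 2 (t+3) from by rw [← Finset.Ico_add_one_right_eq_Icc]; rfl]
    rw [Finset.sum_Ico_eq_sum_range]
    rw [show t+3-2 = t+1 from by omega]
    rw [← Finset.sum_range_reflect g (t+1)]
    refine Finset.sum_congr rfl fun i hi => ?_
    rw [Finset.mem_range] at hi
    rw [hg]
    simp only []
    rw [show t+1-1-i = t-i from by omega, show t+2-(2+i) = t-i from by omega]
    rw [Nat.cast_sub (by omega : i ≤ t)]
    push_cast; ring
  -- per-term factorial to choose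
  have hterm : ∀ k ∈ Finset.Icc 2 (t+2),
      (((k : ℚ) - 1) * (k : ℚ)) / ((Nat.factorial (t+2+k-1)) * (Nat.factorial (t+2-k)))
      = ((k:ℚ)-1)*(k:ℚ)*((2*t+3).choose (t+2-k)) / (Nat.factorial (2*t+3)) := by
    intro k hk
    rw [Finset.mem_Icc] at hk
    have hc := Nat.choose_mul_factorial_mul_factorial (show t+2-k ≤ 2*t+3 by omega)
    rw [show 2*t+3-(t+2-k) = t+1+k from by omega] at hc
    have hc' : ((2*t+3).choose (t+2-k) : ℚ) * (Nat.factorial (t+2-k)) * (Nat.factorial (t+1+k))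
        = (Nat.factorial (2*t+3)) := by exact_mod_cast congrArg (Nat.cast : ℕ → ℚ) hc
    rw [show t+2+k-1 = t+1+k from by omega]
    rw [div_eq_div_iff (by positivity) (by positivity)]
    linear_combination ((k:ℚ)-(k:ℚ)^2) * hc'
  rw [Finset.sum_congr rfl hterm, ← Finset.sum_div, hreindex]
  have : ∑ j ∈ range (t+1), g j = 2^(2*t+1) * ((t:ℚ)+1) := by
    have := hsym.symm.trans hfull
    linarith
  rw [this]
  rw [show 2*(t+2)-3 = 2*t+1 from by omega, show 2*(t+2)-1 = 2*t+3 from by omega]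
  push_cast
  ring
end

section
/- Define f_{n,k} for positive integers n and 0 \le k \le n by: f_{1,0} = f_{1,1} = 0, and for n \ge 2: f_{n,0} = f_{n-1,0}/(n(n-1)) + 1/(n(n-1)(n-2)!^2), f_{n,1} = -f_{n,0}, f_{n,k} = f_{n-1,k}/((n+k-1)(n-k)) for 2 \le k < n, and f_{n,n} = \sum_{k=0}^{n-1} f_{n-1,k}(1-2k)/((n+k-1)(n-k)(2n-1)) + 2/(n!(n-2)!(2n-1)). Then f_{n,n} = (n-1)n/(2n-1)! for all n \ge 1. -/
set_option maxHeartbeats 1000000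


theorem f_diag (f : ℕ → ℕ → ℚ)
    (h10 : f 1 0 = 0) (h11 : f 1 1 = 0)
    (h0 : ∀ n, 2 ≤ n → f n 0 = f (n - 1) 0 / ((n : ℚ) * ((n : ℚ) - 1))
        + 1 / ((n : ℚ) * ((n : ℚ) - 1) * ((Nat.factorial (n - 2) : ℚ)) ^ 2))
    (h1 : ∀ n, 2 ≤ n → f n 1 = - f n 0)
    (hk : ∀ n k, 2 ≤ n → 2 ≤ k → k < n →
        f n k = f (n - 1) k / (((n : ℚ) + (k : ℚ) - 1) * ((n : ℚ) - (k : ℚ))))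
    (hd : ∀ n, 2 ≤ n → f n n =
        (∑ k ∈ Finset.range n,
          f (n - 1) k * (1 - 2 * (k : ℚ))
            / (((n : ℚ) + (k : ℚ) - 1) * ((n : ℚ) - (k : ℚ)) * (2 * (n : ℚ) - 1)))
        + 2 / ((Nat.factorial n : ℚ) * (Nat.factorial (n - 2) : ℚ) * (2 * (n : ℚ) - 1))) :
    ∀ n, 1 ≤ n → f n n = ((n : ℚ) - 1) * (n : ℚ) / (Nat.factorial (2 * n - 1)) := by
  have fne : ∀ m : ℕ, (Nat.factorial m : ℚ) ≠ 0 :=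
    fun m => Nat.cast_ne_zero.mpr (Nat.factorial_ne_zero m)
  -- closed form for the first column
  have f0 : ∀ m : ℕ, f (m+1) 0
      = (((m:ℚ)+1) * m) / (2 * (Nat.factorial (m+1) : ℚ) * (Nat.factorial m : ℚ)) := by
    intro m
    induction m with
    | zero => simpa using h10
    | succ p ih =>
      have h := h0 (p+2) (by omega)
      have e1 : (p+2) - 1 = p+1 := rfl
      have e2 : (p+2) - 2 = p := rfl
      rw [e1, e2] at h
      have hden : ((p+2:ℕ):ℚ) * (((p+2:ℕ):ℚ) - 1) = ((p+2:ℕ):ℚ) * ((p+1:ℕ):ℚ) := by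
        push_cast; ring
      rw [hden] at h
      rw [show p+1+1 = p+2 from rfl, h, ih]
      have h1' := fne p; have h2' := fne (p+1)
      rw [show p+2 = (p+1)+1 from rfl, Nat.factorial_succ (p+1), Nat.factorial_succ p]
      push_cast
      have hp0 : ((p:ℚ)+1) ≠ 0 := by positivity
      have hp1 : ((p:ℚ)+2) ≠ 0 := by positivity
      field_simp
      ring
  -- propagation along rows for columns k ≥ 2
  have fk : ∀ j t : ℕ,
      f (j+2) (j+2) = (((j:ℚ)+2)*((j:ℚ)+1)) / (Nat.factorial (2*j+3) : ℚ) →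
      f (j+2+t) (j+2) = (((j:ℚ)+2)*((j:ℚ)+1))
        / ((Nat.factorial (2*j+t+3) : ℚ) * (Nat.factorial t : ℚ)) := by
    intro j t hbase
    induction t with
    | zero =>
      rw [show 2*j+0+3 = 2*j+3 by omega]
      simpa [Nat.factorial_zero] using hbase
    | succ s ih =>
      have h := hk (j+2+s+1) (j+2) (by omega) (by omega) (by omega)
      have e1 : (j+2+s+1) - 1 = j+2+s := rfl
      rw [e1] at h
      have hden : (((j+2+s+1:ℕ):ℚ) + ((j+2:ℕ):ℚ) - 1) * (((j+2+s+1:ℕ):ℚ) - ((j+2:ℕ):ℚ))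
          = ((2*j+s+4:ℕ):ℚ) * ((s+1:ℕ):ℚ) := by push_cast; ring
      rw [hden] at h
      rw [show j+2+(s+1) = j+2+s+1 from rfl, h, ih]
      rw [show 2*j+(s+1)+3 = (2*j+s+3)+1 by omega, Nat.factorial_succ (2*j+s+3),
        Nat.factorial_succ s]
      have h1' := fne (2*j+s+3); have h2' := fne s
      push_cast
      have p1 : (2*(j:ℚ)+(s:ℚ)+4) ≠ 0 := by positivity
      have p2 : ((s:ℚ)+1) ≠ 0 := by positivity
      have p3 : (2*(j:ℚ)+(s:ℚ)+3+1) ≠ 0 := by positivity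
      field_simp
      ring
  intro n
  induction n using Nat.strong_induction_on with
  | _ n ih =>
    intro hn
    rcases n with _ | _ | _ | m
    · omega
    · rw [h11]; norm_num
    · rw [hd 2 le_rfl, Finset.sum_range_succ, Finset.sum_range_one]
      norm_num [h10, h11, Nat.factorial]
    · show f (m+3) (m+3)
        = (((m+3:ℕ):ℚ) - 1) * ((m+3:ℕ):ℚ) / (Nat.factorial (2*(m+3) - 1))
      have hd' := hd (m+3) (by omega)
      have e1 : (m+3) - 1 = m+2 := rfl
      have e2 : (m+3) - 2 = m+1 := rfl
      rw [e1, e2] at hd'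
      rw [hd', Finset.range_eq_Ico,
        Finset.sum_eq_sum_Ico_succ_bot (by omega : 0 < m+3),
        Finset.sum_eq_sum_Ico_succ_bot (by omega : 0+1 < m+3),
        Finset.sum_Ico_eq_sum_range]
      rw [show m+3-(0+1+1) = m+1 by omega]
      set B : ℕ → ℚ := fun i =>
        (((i:ℚ)+2)^3 + (m:ℚ)*((i:ℚ)+2)^2 - ((m:ℚ)+1)*((i:ℚ)+2) + ((m:ℚ)+3)*((m:ℚ)+2))
          / ((Nat.factorial (m+i+4) : ℚ) * (Nat.factorial (m+1-i) : ℚ) * (2*(m:ℚ)+5)) with hB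
      have hterm : ∀ k ∈ Finset.range (m+1),
          f (m + 2) (0 + 1 + 1 + k) * (1 - 2 * ((0 + 1 + 1 + k : ℕ) : ℚ)) /
            ((((m + 3 : ℕ) : ℚ) + ((0 + 1 + 1 + k : ℕ) : ℚ) - 1) *
              (((m + 3 : ℕ) : ℚ) - ((0 + 1 + 1 + k : ℕ) : ℚ)) * (2 * ((m + 3 : ℕ) : ℚ) - 1))
          = B (k+1) - B k := by
        intro k hk'
        rw [Finset.mem_range] at hk'
        obtain ⟨t, rfl⟩ : ∃ t, m = k + t := ⟨m - k, by omega⟩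
        simp only [hB]
        rw [show 0+1+1+k = k+2 by omega]
        have hb : f (k+2) (k+2) = (((k:ℚ)+2)*((k:ℚ)+1)) / (Nat.factorial (2*k+3) : ℚ) := by
          rw [ih (k+2) (by omega) (by omega), show 2*(k+2)-1 = 2*k+3 by omega]
          push_cast; ring
        have hval := fk k t hb
        rw [show k+t+2 = k+2+t by omega, hval]
        have hd1 : ((k+t+3:ℕ):ℚ) + ((k+2:ℕ):ℚ) - 1 = ((2*k+t+4:ℕ):ℚ) := by push_cast; ring
        have hd2 : ((k+t+3:ℕ):ℚ) - ((k+2:ℕ):ℚ) = ((t+1:ℕ):ℚ) := by push_cast; ring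
        have hd3 : 2*((k+t+3:ℕ):ℚ) - 1 = ((2*k+2*t+5:ℕ):ℚ) := by push_cast; ring
        rw [hd1, hd2, hd3]
        rw [show k+t+(k+1)+4 = ((2*k+t+3)+1)+1 by omega,
            show k+t+1-(k+1) = t by omega,
            show k+t+k+4 = (2*k+t+3)+1 by omega,
            show k+t+1-k = t+1 by omega,
            Nat.factorial_succ ((2*k+t+3)+1), Nat.factorial_succ (2*k+t+3),
            Nat.factorial_succ t]
        have n1 := fne (2*k+t+3); have n2 := fne t
        push_cast
        have p1 : (2*(k:ℚ)+(t:ℚ)+4) ≠ 0 := by positivity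
        have p2 : ((t:ℚ)+1) ≠ 0 := by positivity
        have p3 : (2*(k:ℚ)+2*(t:ℚ)+5) ≠ 0 := by positivity
        have p4 : (2*(k:ℚ)+(t:ℚ)+3+1) ≠ 0 := by positivity
        have p5 : (2*(k:ℚ)+(t:ℚ)+3+1+1) ≠ 0 := by positivity
        have p6 : (2*((k:ℚ)+(t:ℚ))+5) ≠ 0 := by positivity
        field_simp
        ring
      rw [Finset.sum_congr rfl hterm, Finset.sum_range_sub B (m+1)]
      have hA : f (m+2) 0 = (((m:ℚ)+2) * ((m:ℚ)+1))
          / (2 * (Nat.factorial (m+2) : ℚ) * (Nat.factorial (m+1) : ℚ)) := by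
        have h := f0 (m+1)
        rw [show m+1+1 = m+2 from rfl] at h
        rw [h]; push_cast; ring
      rw [show (0+1 : ℕ) = 1 by omega, h1 (m+2) (by omega), hA]
      simp only [hB]
      clear_value B
      clear hterm hd' hB B ih hd hk h0 h1 fk f0 h10 h11
      rw [show m+(m+1)+4 = 2*m+5 by omega, show m+1-(m+1) = 0 by omega,
          show m+0+4 = m+4 by omega, show m+1-0 = m+1 by omega,
          show 2*(m+3)-1 = 2*m+5 by omega, Nat.factorial_zero]
      have hd1 : ((m+3:ℕ):ℚ) + ((0:ℕ):ℚ) - 1 = ((m+2:ℕ):ℚ) := by push_cast; ring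
      have hd2 : ((m+3:ℕ):ℚ) - ((0:ℕ):ℚ) = ((m+3:ℕ):ℚ) := by push_cast; ring
      have hd3 : 2*((m+3:ℕ):ℚ) - 1 = ((2*m+5:ℕ):ℚ) := by push_cast; ring
      have hd4 : ((m+3:ℕ):ℚ) + ((1:ℕ):ℚ) - 1 = ((m+3:ℕ):ℚ) := by push_cast; ring
      have hd5 : ((m+3:ℕ):ℚ) - ((1:ℕ):ℚ) = ((m+2:ℕ):ℚ) := by push_cast; ring
      rw [hd1, hd2, hd3, hd4, hd5]
      rw [show m+4 = (m+3)+1 by omega, Nat.factorial_succ (m+3),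
          show m+3 = (m+2)+1 from rfl, Nat.factorial_succ (m+2),
          show m+2 = (m+1)+1 from rfl, Nat.factorial_succ (m+1)]
      have n1 := fne (m+1); have n2 := fne (2*m+5)
      push_cast
      have p1 : ((m:ℚ)+2) ≠ 0 := by positivity
      have p2 : ((m:ℚ)+3) ≠ 0 := by positivity
      have p3 : (2*(m:ℚ)+5) ≠ 0 := by positivity
      have p4 : ((m:ℚ)+1+1) ≠ 0 := by positivity
      have p5 : ((m:ℚ)+1+1+1) ≠ 0 := by positivity
      have p6 : ((m:ℚ)+1+1+1+1) ≠ 0 := by positivity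
      have p7 : ((m:ℚ)+2+1) ≠ 0 := by positivity
      have p8 : ((m:ℚ)+3+1) ≠ 0 := by positivity
      field_simp
      ring
end

section
/- With f_{n,k} defined by the recursion as stated, for all integers n \ge 2 and 2 \le k \le n, f_{n,k} = (k-1)k/((n+k-1)!(n-k)!). -/
set_option maxHeartbeats 1600000 in
theorem f_closed (f : ℕ → ℕ → ℚ)
    (h10 : f 1 0 = 0) (h11 : f 1 1 = 0)
    (h0 : ∀ n, 2 ≤ n → f n 0 = f (n - 1) 0 / ((n : ℚ) * ((n : ℚ) - 1))
        + 1 / ((n : ℚ) * ((n : ℚ) - 1) * ((Nat.factorial (n - 2) : ℚ)) ^ 2))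
    (h1 : ∀ n, 2 ≤ n → f n 1 = - f n 0)
    (hk : ∀ n k, 2 ≤ n → 2 ≤ k → k < n →
        f n k = f (n - 1) k / (((n : ℚ) + (k : ℚ) - 1) * ((n : ℚ) - (k : ℚ))))
    (hd : ∀ n, 2 ≤ n → f n n =
        (∑ k ∈ Finset.range n,
          f (n - 1) k * (1 - 2 * (k : ℚ))
            / (((n : ℚ) + (k : ℚ) - 1) * ((n : ℚ) - (k : ℚ)) * (2 * (n : ℚ) - 1)))
        + 2 / ((Nat.factorial n : ℚ) * (Nat.factorial (n - 2) : ℚ) * (2 * (n : ℚ) - 1))) :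
    ∀ n k, 2 ≤ n → 2 ≤ k → k ≤ n →
      f n k = ((k : ℚ) - 1) * (k : ℚ)
        / ((Nat.factorial (n + k - 1) : ℚ) * (Nat.factorial (n - k) : ℚ)) := by
  -- closed form for the zeroth column
  have hf0 : ∀ n : ℕ, 1 ≤ n →
      f n 0 = ((n:ℚ) - 1) / (2 * ((Nat.factorial (n-1) : ℚ))^2) := by
    intro n hn
    induction n, hn using Nat.le_induction with
    | base => simpa using h10
    | succ q hq ih =>
      have hrec := h0 (q+1) (by omega)
      have e1 : q + 1 - 1 = q := by omega
      have e2 : q + 1 - 2 = q - 1 := by omega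
      rw [e1, e2] at hrec
      rw [hrec, ih]
      obtain ⟨r, rfl⟩ : ∃ r, q = r + 1 := ⟨q - 1, by omega⟩
      have e3 : r + 1 - 1 = r := by omega
      rw [e3, show r + 1 + 1 - 1 = r + 1 from by omega, Nat.factorial_succ]
      have hF : ((Nat.factorial r : ℚ)) ≠ 0 := Nat.cast_ne_zero.mpr (Nat.factorial_ne_zero r)
      push_cast
      have h1 : (r:ℚ) + 1 ≠ 0 := by positivity
      have h2 : (r:ℚ) + 2 ≠ 0 := by positivity
      field_simp
      ring
  intro n k hn
  revert k
  induction n, hn using Nat.le_induction with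
  | base =>
    intro k hk2 hkn
    interval_cases k
    have hd2 := hd 2 (le_refl 2)
    rw [Finset.sum_range_succ, Finset.sum_range_succ, Finset.sum_range_zero] at hd2
    norm_num [h10, h11, Nat.factorial] at hd2 ⊢
    exact hd2
  | succ n hn ih =>
    intro k hk2 hkn1
    by_cases hke : k = n + 1
    · -- diagonal entry
      subst hke
      have hdn := hd (n+1) (by omega)
      simp only [Nat.add_sub_cancel] at hdn
      rw [show n + 1 - 2 = n - 1 from by omega] at hdn
      set g : ℕ → ℚ := fun j => ((j:ℚ)^3 + ((n:ℚ)-2)*(j:ℚ)^2 + (1-(n:ℚ))*(j:ℚ)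
            + (n:ℚ)^2 + (n:ℚ))
          / ((Nat.factorial (n+j) : ℚ) * (Nat.factorial (n+1-j) : ℚ) * (2*(n:ℚ)+1)) with hg
      rw [Finset.range_eq_Ico,
        ← Finset.sum_Ico_consecutive _ (by omega : (0:ℕ) ≤ 2) (by omega : 2 ≤ n+1)] at hdn
      rw [show Finset.Ico 0 2 = ({0, 1} : Finset ℕ) from by decide,
        Finset.sum_insert (by decide), Finset.sum_singleton] at hdn
      have hmid : ∀ i ∈ Finset.Ico 2 (n+1),
          f n i * (1 - 2 * (i : ℚ))
            / (((((n+1 : ℕ) : ℚ)) + (i : ℚ) - 1) * ((((n+1 : ℕ) : ℚ)) - (i : ℚ)) * (2 * (((n+1:ℕ)) : ℚ) - 1))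
          = g (i+1) - g i := by
        intro i hi
        rw [Finset.mem_Ico] at hi
        rw [ih i hi.1 (by omega), hg]
        simp only
        obtain ⟨j, rfl⟩ : ∃ j, i = j + 2 := ⟨i - 2, by omega⟩
        obtain ⟨m, hnm⟩ : ∃ m, n = j + 2 + m := ⟨n - (j+2), by omega⟩
        subst hnm
        rw [show j + 2 + m + (j + 2) - 1 = 2*j+m+3 from by omega,
            show j + 2 + m - (j + 2) = m from by omega,
            show j + 2 + m + (j + 2) = 2*j+m+3+1 from by omega,
            show j + 2 + m + 1 - (j + 2) = m + 1 from by omega,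
            show j + 2 + m + (j + 2 + 1) = 2*j+m+3+1+1 from by omega,
            show j + 2 + m + 1 - (j + 2 + 1) = m from by omega]
        have hF : ((Nat.factorial (2*j+m+3) : ℚ)) ≠ 0 := Nat.cast_ne_zero.mpr (Nat.factorial_ne_zero _)
        have hG : ((Nat.factorial m : ℚ)) ≠ 0 := Nat.cast_ne_zero.mpr (Nat.factorial_ne_zero _)
        push_cast [Nat.factorial_succ]
        have hj : (0:ℚ) ≤ (j:ℚ) := Nat.cast_nonneg j
        have hm : (0:ℚ) ≤ (m:ℚ) := Nat.cast_nonneg m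
        have d1 : (j:ℚ) + 2 + (m:ℚ) + 1 + ((j:ℚ)+2) - 1 ≠ 0 := by intro h; linarith
        have d2 : (j:ℚ) + 2 + (m:ℚ) + 1 - ((j:ℚ)+2) ≠ 0 := by intro h; linarith
        have d3 : 2 * ((j:ℚ) + 2 + (m:ℚ) + 1) - 1 ≠ 0 := by intro h; linarith
        have d4 : 2 * ((j:ℚ) + 2 + (m:ℚ)) + 1 ≠ 0 := by intro h; linarith
        field_simp
        ring
      rw [Finset.sum_congr rfl hmid] at hdn
      have htel : ∑ i ∈ Finset.Ico 2 (n+1), (g (i+1) - g i) = g (n+1) - g 2 := by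
        rw [Finset.sum_Ico_eq_sub _ (by omega), Finset.sum_range_sub, Finset.sum_range_sub]
        ring
      rw [htel] at hdn
      rw [hdn, h1 n (by omega), hf0 n (by omega), hg]
      simp only
      obtain ⟨p, rfl⟩ : ∃ p, n = p + 2 := ⟨n - 2, by omega⟩
      rw [show p + 2 + (p + 2 + 1) = 2*p+5 from by omega,
          show p + 2 + 1 + (p + 2 + 1) - 1 = 2*p+5 from by omega,
          show p + 2 + 1 - (p + 2 + 1) = 0 from by omega,
          show p + 2 + 2 = p + 4 from by omega,
          show p + 2 + 1 - 2 = p + 1 from by omega,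
          show p + 2 - 1 = p + 1 from by omega,
          show p + 2 + 1 = p + 3 from by omega,
          show Nat.factorial (p+4) = (p+4)*((p+3)*((p+2)*Nat.factorial (p+1))) from by
            rw [show p+4 = (p+3)+1 from by omega, Nat.factorial_succ,
                show p+3 = (p+2)+1 from by omega, Nat.factorial_succ,
                show p+2 = (p+1)+1 from by omega, Nat.factorial_succ],
          show Nat.factorial (p+3) = (p+3)*((p+2)*Nat.factorial (p+1)) from by
            rw [show p+3 = (p+2)+1 from by omega, Nat.factorial_succ,
                show p+2 = (p+1)+1 from by omega, Nat.factorial_succ],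
          Nat.factorial_zero]
      have hP : ((Nat.factorial (p+1) : ℚ)) ≠ 0 := Nat.cast_ne_zero.mpr (Nat.factorial_ne_zero _)
      have hQ : ((Nat.factorial (2*p+5) : ℚ)) ≠ 0 := Nat.cast_ne_zero.mpr (Nat.factorial_ne_zero _)
      push_cast
      have hp : (0:ℚ) ≤ (p:ℚ) := Nat.cast_nonneg p
      have d1 : (p:ℚ) + 3 + 0 - 1 ≠ 0 := by intro h; linarith
      have d2 : (p:ℚ) + 3 - 0 ≠ 0 := by intro h; linarith
      have d3 : 2 * ((p:ℚ) + 3) - 1 ≠ 0 := by intro h; linarith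
      have d4 : (p:ℚ) + 3 + 1 - 1 ≠ 0 := by intro h; linarith
      have d5 : (p:ℚ) + 3 - 1 ≠ 0 := by intro h; linarith
      have d6 : 2 * ((p:ℚ) + 2) + 1 ≠ 0 := by intro h; linarith
      have d7 : (p:ℚ) + 1 ≠ 0 := by intro h; linarith
      have d8 : (p:ℚ) + 2 ≠ 0 := by intro h; linarith
      have d9 : (p:ℚ) + 3 ≠ 0 := by intro h; linarith
      have d10 : (p:ℚ) + 4 ≠ 0 := by intro h; linarith
      field_simp
      ring

    · -- below the diagonal
      have hkn : k ≤ n := by omega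
      have hrec := hk (n+1) k (by omega) hk2 (by omega)
      simp only [Nat.add_sub_cancel] at hrec
      rw [hrec, ih k hk2 hkn]
      obtain ⟨j, rfl⟩ : ∃ j, k = j + 2 := ⟨k - 2, by omega⟩
      obtain ⟨m, rfl⟩ : ∃ m, n = j + 2 + m := ⟨n - (j+2), by omega⟩
      rw [show j + 2 + m + (j + 2) - 1 = 2*j+m+3 from by omega,
          show j + 2 + m - (j + 2) = m from by omega,
          show j + 2 + m + 1 + (j + 2) - 1 = 2*j+m+3+1 from by omega,
          show j + 2 + m + 1 - (j + 2) = m + 1 from by omega,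
          div_div]
      congr 1
      push_cast [Nat.factorial_succ]
      ring
end

section
/- Define the double sequence M_{p,q} for integers p,q \ge 0 by M_{p,q} = 0 if p = 0 or q = 0, and M_{p,q} = ((p-1)M_{p-1,q} + (q-1)M_{p,q-1} + |p-q|)/(p+q-1) for p,q \ge 1. Then for all integers p \ge 0, M_{p+1,p+1} = 2^{2p-1} p \cdot (p!)^2/(2p+1)! (where for p=0 this value is 0). -/
open Finset

lemma H1 (n : ℕ) : ∑ i ∈ range (n+1), ((n.choose i : ℚ)) = 2^n := by
  have := Nat.sum_range_choose n
  exact_mod_cast congrArg (Nat.cast (R := ℚ)) this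

lemma Hmul (n i : ℕ) : ((i:ℚ)+1) * ((n+1).choose (i+1)) = ((n:ℚ)+1) * (n.choose i) := by
  have := Nat.add_one_mul_choose_eq n i
  have h2 : ((n.succ * n.choose i : ℕ) : ℚ) = (((n+1).choose (i+1) * (i+1) : ℕ) : ℚ) := by
    exact_mod_cast congrArg (Nat.cast (R := ℚ)) this
  push_cast at h2
  linarith [h2]

lemma H2 (n : ℕ) : ∑ i ∈ range (n+1), (i:ℚ) * (n.choose i) = n * 2^n / 2 := by
  cases n with
  | zero => simp
  | succ k =>
    rw [Finset.sum_range_succ']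
    have : ∀ i, ((i+1 : ℕ):ℚ) * ((k+1).choose (i+1)) = ((k:ℚ)+1) * (k.choose i) := by
      intro i; push_cast; exact Hmul k i
    rw [Finset.sum_congr rfl (fun i _ => this i)]
    rw [← Finset.mul_sum, H1]
    push_cast; ring

lemma H3 (n : ℕ) : ∑ i ∈ range (n+1), (i:ℚ)^2 * (n.choose i) = n * (n+1) * 2^n / 4 := by
  cases n with
  | zero => simp
  | succ k =>
    rw [Finset.sum_range_succ']
    have : ∀ i, ((i+1 : ℕ):ℚ)^2 * ((k+1).choose (i+1))
        = ((k:ℚ)+1) * ((i:ℚ) * (k.choose i)) + ((k:ℚ)+1) * ((k.choose i : ℚ)) := by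
      intro i
      have h := Hmul k i
      push_cast
      nlinarith [h]
    rw [Finset.sum_congr rfl (fun i _ => this i)]
    rw [Finset.sum_add_distrib, ← Finset.mul_sum, ← Finset.mul_sum, H1, H2]
    push_cast; ring

def Scor (p q : ℕ) : ℚ :=
  ∑ i ∈ Finset.Ico p (q - 1), (((q:ℚ) - i) * ((q:ℚ) - i - 1) / 2) * ((p + q - 1).choose i : ℚ)

def Ppow (p q : ℕ) : ℚ :=
  ((p:ℚ) + ((q:ℚ)-(p:ℚ))*((q:ℚ)-(p:ℚ)+1)/2 - 1) * 2^(p+q) / 8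

def Uu (p q : ℕ) : ℚ := Ppow p q - Scor p q

-- the generic sum rearrangement
lemma keyS (c : ℕ) (X : ℕ → ℚ) :
    ∑ j ∈ range (c+1), (((c:ℚ)+2-j)*((c:ℚ)+1-j)/2) * (X j + X (j+1))
    = (∑ j ∈ range (c+2), (((c:ℚ)+3-j)*((c:ℚ)+2-j)/2) * X j)
      + (∑ j ∈ range c, (((c:ℚ)+1-j)*((c:ℚ)-j)/2) * X (j+1))
      - ((c:ℚ)+2) * X 0 := by
  have A : ∑ j ∈ range (c+2), (((c:ℚ)+2-j) * X j)
      = (∑ j ∈ range (c+1), ((c:ℚ)+1-j) * X (j+1)) + ((c:ℚ)+2) * X 0 := by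
    rw [Finset.sum_range_succ' (fun j => (((c:ℚ)+2-j) * X j)) (c+1)]
    congr 1
    · exact Finset.sum_congr rfl (fun j _ => by push_cast; ring)
    · push_cast; ring
  -- split LHS
  have L : ∑ j ∈ range (c+1), (((c:ℚ)+2-j)*((c:ℚ)+1-j)/2) * (X j + X (j+1))
      = (∑ j ∈ range (c+1), (((c:ℚ)+2-j)*((c:ℚ)+1-j)/2) * X j)
        + ∑ j ∈ range (c+1), (((c:ℚ)+2-j)*((c:ℚ)+1-j)/2) * X (j+1) := by
    rw [← Finset.sum_add_distrib]
    exact Finset.sum_congr rfl (fun j _ => by ring)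
  rw [L]
  -- extend first sum to range (c+2) : extra term is 0
  have E1 : ∑ j ∈ range (c+2), (((c:ℚ)+2-j)*((c:ℚ)+1-j)/2) * X j
      = ∑ j ∈ range (c+1), (((c:ℚ)+2-j)*((c:ℚ)+1-j)/2) * X j := by
    rw [Finset.sum_range_succ]
    have : (((c:ℚ)+2-(c+1:ℕ))*((c:ℚ)+1-(c+1:ℕ))/2) = 0 := by push_cast; ring
    rw [this]; ring
  -- extend third sum to range (c+1) : extra term is 0
  have E2 : ∑ j ∈ range (c+1), (((c:ℚ)+1-j)*((c:ℚ)-j)/2) * X (j+1)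
      = ∑ j ∈ range c, (((c:ℚ)+1-j)*((c:ℚ)-j)/2) * X (j+1) := by
    rw [Finset.sum_range_succ]
    have : (((c:ℚ)+1-(c:ℕ))*((c:ℚ)-(c:ℕ))/2) = 0 := by push_cast; ring
    rw [this]; ring
  rw [← E1, ← E2]
  have key : ((c:ℚ)+2) * X 0
      = (∑ j ∈ range (c+2), (((c:ℚ)+2-j) * X j))
        - ∑ j ∈ range (c+1), ((c:ℚ)+1-j) * X (j+1) := by
    rw [A]; ring
  rw [key]
  have G1 : ∑ j ∈ range (c+2), (((c:ℚ)+3-j)*((c:ℚ)+2-j)/2) * X j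
      - ∑ j ∈ range (c+2), (((c:ℚ)+2-j) * X j)
      = ∑ j ∈ range (c+2), (((c:ℚ)+2-j)*((c:ℚ)+1-j)/2) * X j := by
    rw [← Finset.sum_sub_distrib]
    exact Finset.sum_congr rfl (fun j _ => by ring)
  have G2 : ∑ j ∈ range (c+1), (((c:ℚ)+1-j)*((c:ℚ)-j)/2) * X (j+1)
      + ∑ j ∈ range (c+1), (((c:ℚ)+1-j) * X (j+1))
      = ∑ j ∈ range (c+1), (((c:ℚ)+2-j)*((c:ℚ)+1-j)/2) * X (j+1) := by
    rw [← Finset.sum_add_distrib]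
    exact Finset.sum_congr rfl (fun j _ => by ring)
  linarith [G1, G2]


lemma Scor_to_range (a c : ℕ) :
    Scor (a+1) (a+c+3)
      = ∑ k ∈ range (c+1), (((c:ℚ)+2-k)*((c:ℚ)+1-k)/2) * ((2*a+c+3).choose (a+1+k) : ℚ) := by
  unfold Scor
  rw [show a+c+3-1 = a+c+2 from by omega]
  rw [Finset.sum_Ico_eq_sum_range]
  rw [show a+c+2-(a+1) = c+1 from by omega]
  refine Finset.sum_congr rfl (fun k _ => ?_)
  rw [show a+1+(a+c+3)-1 = 2*a+c+3 from by omega]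
  push_cast
  ring

lemma Scor_to_range2 (a c : ℕ) :
    Scor a (a+c+3)
      = ∑ k ∈ range (c+2), (((c:ℚ)+3-k)*((c:ℚ)+2-k)/2) * ((2*a+c+2).choose (a+k) : ℚ) := by
  unfold Scor
  rw [show a+c+3-1 = a+c+2 from by omega]
  rw [Finset.sum_Ico_eq_sum_range]
  rw [show a+c+2-a = c+2 from by omega]
  refine Finset.sum_congr rfl (fun k _ => ?_)
  rw [show a+(a+c+3)-1 = 2*a+c+2 from by omega]
  push_cast
  ring

lemma Scor_to_range3 (a c : ℕ) :
    Scor (a+1) (a+c+2)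
      = ∑ k ∈ range c, (((c:ℚ)+1-k)*((c:ℚ)-k)/2) * ((2*a+c+2).choose (a+(k+1)) : ℚ) := by
  unfold Scor
  rw [show a+c+2-1 = a+c+1 from by omega]
  rw [Finset.sum_Ico_eq_sum_range]
  rw [show a+c+1-(a+1) = c from by omega]
  refine Finset.sum_congr rfl (fun k _ => ?_)
  rw [show a+1+(a+c+2)-1 = 2*a+c+2 from by omega, show a+1+k = a+(k+1) from by omega]
  push_cast
  ring

lemma Scor_rec' (a c : ℕ) :
    Scor (a+1) (a+c+3)
      = Scor a (a+c+3) + Scor (a+1) (a+c+2) - ((c:ℚ)+2) * ((2*a+c+2).choose a) := by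
  rw [Scor_to_range, Scor_to_range2, Scor_to_range3]
  have pas : ∀ k, ((2*a+c+3).choose (a+1+k) : ℚ)
      = ((2*a+c+2).choose (a+k) : ℚ) + ((2*a+c+2).choose (a+(k+1)) : ℚ) := by
    intro k
    rw [show a+1+k = (a+k)+1 from by omega, show 2*a+c+3 = (2*a+c+2)+1 from by omega,
        show a+(k+1) = (a+k)+1 from by omega]
    exact_mod_cast congrArg (Nat.cast (R := ℚ)) (Nat.choose_succ_succ (2*a+c+2) (a+k))
  rw [Finset.sum_congr rfl (fun k _ => by rw [pas k])]
  have := keyS c (fun j => ((2*a+c+2).choose (a+j) : ℚ))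
  simpa using this

lemma Scor_rec0 (a : ℕ) :
    Scor (a+1) (a+2) = Scor a (a+2) + Scor (a+1) (a+1) - ((2*a+1).choose a : ℚ) := by
  unfold Scor
  rw [show a+2-1 = a+1 from by omega, show a+1-1 = a from by omega]
  rw [Finset.Ico_self, show Finset.Ico a (a+1) = {a} from by
        rw [Finset.Ico_add_one_right_eq_Icc, Finset.Icc_self]]
  rw [show Finset.Ico (a+1) a = ∅ from Finset.Ico_eq_empty (by omega)]
  simp only [Finset.sum_empty, Finset.sum_singleton]
  rw [show a+(a+2)-1 = 2*a+1 from by omega]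
  push_cast
  ring

lemma Ppow_rec (a b : ℕ) : Ppow (a+1) (a+b+2) = Ppow a (a+b+2) + Ppow (a+1) (a+b+1) := by
  unfold Ppow
  rw [show (a+1)+(a+b+2) = (a+(a+b+2))+1 from by omega,
      show (a+1)+(a+b+1) = a+(a+b+2) from by omega, pow_succ]
  push_cast; ring

lemma Uu_rec (a b : ℕ) :
    Uu (a+1) (a+b+2)
      = Uu a (a+b+2) + Uu (a+1) (a+b+1) + ((b:ℚ)+1) * ((2*a+b+1).choose a : ℚ) := by
  unfold Uu
  rw [Ppow_rec]
  rcases b with _ | c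
  · simp only [Nat.add_zero, Nat.cast_zero]
    have h := Scor_rec0 a
    rw [show 2*a+0+1 = 2*a+1 from by omega]
    push_cast
    linarith [h]
  · rw [show a+(c+1)+2 = a+c+3 from by omega, show a+(c+1)+1 = a+c+2 from by omega,
        show 2*a+(c+1)+1 = 2*a+c+2 from by omega]
    have h := Scor_rec' a c
    push_cast
    linarith [h]

lemma Uu_diag (a : ℕ) : Uu (a+1) (a+1) = (a:ℚ) * 2^(2*a+2) / 8 := by
  unfold Uu Ppow Scor
  rw [show a+1-1 = a from by omega,
      show Finset.Ico (a+1) a = ∅ from Finset.Ico_eq_empty (by omega)]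
  rw [show (a+1)+(a+1) = 2*a+2 from by omega]
  simp only [Finset.sum_empty]
  push_cast; ring

lemma Uu_offdiag (a : ℕ) : Uu a (a+1) = (a:ℚ) * 2^(2*a+1) / 8 := by
  unfold Uu Ppow Scor
  rw [show a+1-1 = a from by omega, Finset.Ico_self]
  rw [show a+(a+1) = 2*a+1 from by omega]
  simp only [Finset.sum_empty]
  push_cast; ring

lemma Uu_zero (m : ℕ) : Uu 0 (m+1) = 0 := by
  unfold Uu Ppow Scor
  rw [show m+1-1 = m from by omega, show 0+(m+1)-1 = m from by omega,
      ← Finset.range_eq_Ico]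
  have ext : ∑ i ∈ range m, (((m+1:ℕ):ℚ) - i) * (((m+1:ℕ):ℚ) - i - 1) / 2 * (m.choose i : ℚ)
      = ∑ i ∈ range (m+1), (((m+1:ℕ):ℚ) - i) * (((m+1:ℕ):ℚ) - i - 1) / 2 * (m.choose i : ℚ) := by
    rw [Finset.sum_range_succ]
    have : (((m+1:ℕ):ℚ) - (m:ℕ)) * (((m+1:ℕ):ℚ) - (m:ℕ) - 1) / 2 = 0 := by push_cast; ring
    rw [this]; ring
  push_cast at ext ⊢
  rw [ext]
  have expand : ∀ i : ℕ, ((m:ℚ)+1 - i) * ((m:ℚ)+1 - i - 1) / 2 * (m.choose i : ℚ)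
      = (((m:ℚ)^2+m)/2) * (m.choose i : ℚ) - (((m:ℚ)*2+1)/2) * ((i:ℚ) * (m.choose i : ℚ))
        + (1/2) * ((i:ℚ)^2 * (m.choose i : ℚ)) := by
    intro i; ring
  rw [Finset.sum_congr rfl (fun i _ => expand i)]
  rw [Finset.sum_add_distrib, Finset.sum_sub_distrib, ← Finset.mul_sum, ← Finset.mul_sum,
      ← Finset.mul_sum, H1, H2, H3,
      show 0+(m+1) = m+1 from by omega]
  push_cast
  ring

def Ff (p q : ℕ) : ℚ :=
  (if p ≤ q then Uu p q else Uu q p) * ((p-1).factorial : ℚ) * ((q-1).factorial : ℚ)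
    / ((p+q-1).factorial : ℚ)

lemma Ff_symm (p q : ℕ) : Ff p q = Ff q p := by
  unfold Ff
  rcases lt_trichotomy p q with h | h | h
  · rw [if_pos h.le, if_neg (by omega), show q+p-1 = p+q-1 from by omega]; ring
  · subst h; ring
  · rw [if_neg (by omega), if_pos h.le, show q+p-1 = p+q-1 from by omega]; ring

lemma fac_ne (n : ℕ) : ((n.factorial : ℚ)) ≠ 0 :=
  Nat.cast_ne_zero.mpr (Nat.factorial_ne_zero n)

lemma Ff_eq (p q : ℕ) (h : p ≤ q) :
    Ff p q = Uu p q * ((p-1).factorial : ℚ) * ((q-1).factorial : ℚ) / ((p+q-1).factorial : ℚ) := by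
  unfold Ff; rw [if_pos h]

-- diagonal case of recurrence
lemma Ff_rec_diag (p : ℕ) (hp : 1 ≤ p) :
    ((p:ℚ) + p - 1) * Ff p p
      = ((p:ℚ) - 1) * Ff (p-1) p + ((p:ℚ) - 1) * Ff p (p-1) + ((p:ℚ) - (p:ℚ)) := by
  obtain ⟨a, rfl⟩ : ∃ a, p = a + 1 := ⟨p - 1, by omega⟩
  rw [show a+1-1 = a from by omega, Ff_symm (a+1) a]
  rw [Ff_eq (a+1) (a+1) le_rfl, Ff_eq a (a+1) (by omega)]
  rw [show (a+1)+(a+1)-1 = 2*a+1 from by omega, show a+(a+1)-1 = 2*a from by omega,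
      show a+1-1 = a from by omega, Uu_diag, Uu_offdiag]
  rcases a with _ | t
  · norm_num
  · have hfac : ((2*(t+1)+1).factorial : ℚ) = (2*(t:ℚ)+3) * ((2*(t+1)).factorial : ℚ) := by
      rw [show 2*(t+1)+1 = (2*(t+1))+1 from rfl, Nat.factorial_succ]
      push_cast; ring
    have hfac2 : (((t+1):ℕ).factorial : ℚ) = ((t:ℚ)+1) * ((t.factorial : ℚ)) := by
      rw [Nat.factorial_succ]; push_cast; ring
    rw [show t+1-1 = t from by omega, hfac, hfac2]
    have h1 := fac_ne (2*(t+1))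
    have h2 := fac_ne t
    field_simp
    push_cast
    ring

lemma choose_fact (a b : ℕ) :
    (((2*a+b+1).choose a : ℕ) : ℚ) * (a.factorial : ℚ) * (((a+b+1).factorial : ℚ))
      = ((2*a+b+1).factorial : ℚ) := by
  have h := Nat.choose_mul_factorial_mul_factorial (show a ≤ 2*a+b+1 from by omega)
  rw [show 2*a+b+1-a = a+b+1 from by omega] at h
  exact_mod_cast congrArg (Nat.cast (R := ℚ)) h

lemma Ff_rec_lt (a b : ℕ) :
    (((a+1:ℕ):ℚ) + ((a+b+2:ℕ):ℚ) - 1) * Ff (a+1) (a+b+2)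
      = (((a+1:ℕ):ℚ) - 1) * Ff a (a+b+2) + (((a+b+2:ℕ):ℚ) - 1) * Ff (a+1) (a+b+1)
        + (((a+b+2:ℕ):ℚ) - ((a+1:ℕ):ℚ)) := by
  rw [Ff_eq (a+1) (a+b+2) (by omega), Ff_eq a (a+b+2) (by omega),
      Ff_eq (a+1) (a+b+1) (by omega)]
  rw [show (a+1)+(a+b+2)-1 = 2*a+b+2 from by omega,
      show a+(a+b+2)-1 = 2*a+b+1 from by omega,
      show (a+1)+(a+b+1)-1 = 2*a+b+1 from by omega,
      show (a+1)-1 = a from by omega,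
      show (a+b+2)-1 = a+b+1 from by omega,
      show (a+b+1)-1 = a+b from by omega]
  rw [Uu_rec a b]
  have hC : (((2*a+b+1).choose a : ℕ):ℚ)
      = ((2*a+b+1).factorial : ℚ) / ((a.factorial : ℚ) * ((a+b+1).factorial : ℚ)) := by
    rw [eq_div_iff (mul_ne_zero (fac_ne _) (fac_ne _))]
    have := choose_fact a b
    linear_combination this
  rw [hC]
  have hfacN : ((2*a+b+2).factorial : ℚ) = (2*(a:ℚ)+(b:ℚ)+2) * ((2*a+b+1).factorial : ℚ) := by
    rw [show 2*a+b+2 = (2*a+b+1)+1 from by omega, Nat.factorial_succ]; push_cast; ring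
  have hfacq : ((a+b+1).factorial : ℚ) = ((a:ℚ)+(b:ℚ)+1) * ((a+b).factorial : ℚ) := by
    rw [show a+b+1 = (a+b)+1 from rfl, Nat.factorial_succ]; push_cast; ring
  rcases a with _ | t
  · -- a = 0
    have h0 : Uu 0 (0+b+2) = 0 := by
      rw [show 0+b+2 = (b+1)+1 from by omega]; exact Uu_zero (b+1)
    rw [h0, hfacN, hfacq]
    have h1 := fac_ne (2*0+b+1)
    have h2 := fac_ne (0+b)
    have h3 := fac_ne (0:ℕ)
    push_cast
    field_simp
    ring
  · -- a = t+1
    have hfacA : (((t+1):ℕ).factorial : ℚ) = ((t:ℚ)+1) * ((t.factorial : ℚ)) := by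
      rw [Nat.factorial_succ]; push_cast; ring
    rw [show (t+1)-1 = t from by omega] at *
    rw [hfacN, hfacq, hfacA]
    have h1 := fac_ne (2*(t+1)+b+1)
    have h2 := fac_ne ((t+1)+b)
    have h3 := fac_ne t
    push_cast
    field_simp
    ring

lemma Ff_rec (p q : ℕ) (hp : 1 ≤ p) (hq : 1 ≤ q) :
    ((p:ℚ) + (q:ℚ) - 1) * Ff p q
      = ((p:ℚ)-1) * Ff (p-1) q + ((q:ℚ)-1) * Ff p (q-1) + |(p:ℚ) - (q:ℚ)| := by
  rcases lt_trichotomy p q with h | h | h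
  · obtain ⟨a, rfl⟩ : ∃ a, p = a+1 := ⟨p-1, by omega⟩
    obtain ⟨b, rfl⟩ : ∃ b, q = a+b+2 := ⟨q-a-2, by omega⟩
    have habs : |((a+1:ℕ):ℚ) - ((a+b+2:ℕ):ℚ)| = ((a+b+2:ℕ):ℚ) - ((a+1:ℕ):ℚ) := by
      rw [abs_sub_comm, abs_of_nonneg (by push_cast; linarith)]
    rw [habs, show (a+1)-1 = a from by omega, show (a+b+2)-1 = a+b+1 from by omega]
    exact Ff_rec_lt a b
  · subst h
    rw [sub_self, abs_zero]
    have := Ff_rec_diag p hp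
    linarith [this]
  · obtain ⟨a, rfl⟩ : ∃ a, q = a+1 := ⟨q-1, by omega⟩
    obtain ⟨b, rfl⟩ : ∃ b, p = a+b+2 := ⟨p-a-2, by omega⟩
    have habs : |((a+b+2:ℕ):ℚ) - ((a+1:ℕ):ℚ)| = ((a+b+2:ℕ):ℚ) - ((a+1:ℕ):ℚ) := by
      rw [abs_of_nonneg (by push_cast; linarith)]
    rw [habs, show (a+b+2)-1 = a+b+1 from by omega, show (a+1)-1 = a from by omega]
    have key := Ff_rec_lt a b
    rw [Ff_symm (a+1) (a+b+2), Ff_symm a (a+b+2), Ff_symm (a+1) (a+b+1)] at key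
    linarith [key]

lemma M_Ff (M : ℕ → ℕ → ℚ)
    (h0 : ∀ p q, p = 0 ∨ q = 0 → M p q = 0)
    (hrec : ∀ p q, 1 ≤ p → 1 ≤ q →
        M p q = (((p : ℚ) - 1) * M (p - 1) q + ((q : ℚ) - 1) * M p (q - 1)
          + |(p : ℚ) - (q : ℚ)|) / ((p : ℚ) + (q : ℚ) - 1)) :
    ∀ n p q, p + q ≤ n → 1 ≤ p → 1 ≤ q → M p q = Ff p q := by
  intro n
  induction n with
  | zero => intro p q hn hp hq; omega
  | succ n ih =>
    intro p q hn hp hq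
    rw [hrec p q hp hq]
    have e1 : ((p:ℚ)-1) * M (p-1) q = ((p:ℚ)-1) * Ff (p-1) q := by
      rcases Nat.eq_or_lt_of_le hp with h | h
      · rw [← h]; norm_num
      · rw [ih (p-1) q (by omega) (by omega) hq]
    have e2 : ((q:ℚ)-1) * M p (q-1) = ((q:ℚ)-1) * Ff p (q-1) := by
      rcases Nat.eq_or_lt_of_le hq with h | h
      · rw [← h]; norm_num
      · rw [ih p (q-1) (by omega) hp (by omega)]
    rw [e1, e2]
    have hne : ((p:ℚ) + (q:ℚ) - 1) ≠ 0 := by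
      have h1 : (1:ℚ) ≤ (p:ℚ) := by exact_mod_cast hp
      have h2 : (1:ℚ) ≤ (q:ℚ) := by exact_mod_cast hq
      linarith
    rw [div_eq_iff hne]
    linarith [Ff_rec p q hp hq]

theorem M_diag (M : ℕ → ℕ → ℚ)
    (h0 : ∀ p q, p = 0 ∨ q = 0 → M p q = 0)
    (hrec : ∀ p q, 1 ≤ p → 1 ≤ q →
        M p q = (((p : ℚ) - 1) * M (p - 1) q + ((q : ℚ) - 1) * M p (q - 1)
          + |(p : ℚ) - (q : ℚ)|) / ((p : ℚ) + (q : ℚ) - 1)) :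
    ∀ p : ℕ, M (p + 1) (p + 1)
      = (2 : ℚ) ^ (2 * p - 1) * (p : ℚ) * ((Nat.factorial p : ℚ)) ^ 2
        / (Nat.factorial (2 * p + 1)) := by
  intro p
  rw [M_Ff M h0 hrec (2*p+2) (p+1) (p+1) (by omega) (by omega) (by omega)]
  rw [Ff_eq (p+1) (p+1) le_rfl, show (p+1)-1 = p from by omega,
      show (p+1)+(p+1)-1 = 2*p+1 from by omega, Uu_diag p]
  rcases p with _ | t
  · norm_num
  · rw [show 2*(t+1)-1 = 2*t+1 from by omega, show 2*(t+1)+2 = (2*t+1)+3 from by omega,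
        pow_add]
    have h := fac_ne (2*(t+1)+1)
    rw [show 2*(t+1)+1 = 2*t+3 from by omega] at *
    field_simp
    ring
end

section
/- Define L_{p,q} for integers p,q \ge 0 by L_{p,q} = 0 if p = 0 or q = 0, and L_{p,q} = L_{p-1,q} + L_{p,q-1} + |p-q|\binom{p+q-2}{p-1} for p,q \ge 1. Then L_{p+1,q+1} = \sum_{i=0}^p \sum_{j=0}^q |i-j| \binom{i+j}{i} \binom{p+q-i-j}{p-i} for all integers p,q \ge 0. -/
lemma key_split (A : ℕ → ℕ → ℕ) (p q : ℕ) :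
    ∑ i ∈ Finset.range (p+2), ∑ j ∈ Finset.range (q+2),
        A i j * Nat.choose (p+q+2-i-j) (p+1-i)
    = (∑ i ∈ Finset.range (p+1), ∑ j ∈ Finset.range (q+2),
        A i j * Nat.choose (p+q+1-i-j) (p-i))
    + (∑ i ∈ Finset.range (p+2), ∑ j ∈ Finset.range (q+1),
        A i j * Nat.choose (p+q+1-i-j) (p+1-i))
    + A (p+1) (q+1) := by
  rw [Finset.sum_range_succ]
  have hrow : ∑ j ∈ Finset.range (q+2), A (p+1) j * Nat.choose (p+q+2-(p+1)-j) (p+1-(p+1))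
      = (∑ j ∈ Finset.range (q+1), A (p+1) j) + A (p+1) (q+1) := by
    rw [Finset.sum_range_succ]
    congr 1
    · apply Finset.sum_congr rfl; intro j hj
      have h2 : p+1-(p+1) = 0 := by omega
      simp [h2]
    · have h1 : p+q+2-(p+1)-(q+1) = 0 := by omega
      have h2 : p+1-(p+1) = 0 := by omega
      simp [h1, h2]
  rw [hrow]
  have hmain : ∑ i ∈ Finset.range (p+1), ∑ j ∈ Finset.range (q+2),
        A i j * Nat.choose (p+q+2-i-j) (p+1-i)
      = (∑ i ∈ Finset.range (p+1), ∑ j ∈ Finset.range (q+2),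
          A i j * Nat.choose (p+q+1-i-j) (p-i))
      + (∑ i ∈ Finset.range (p+1), ∑ j ∈ Finset.range (q+2),
          A i j * Nat.choose (p+q+1-i-j) (p+1-i)) := by
    rw [← Finset.sum_add_distrib]
    apply Finset.sum_congr rfl
    intro i hi
    rw [← Finset.sum_add_distrib]
    apply Finset.sum_congr rfl
    intro j hj
    simp only [Finset.mem_range] at hi hj
    have e1 : p+q+2-i-j = (p+q+1-i-j)+1 := by omega
    have e2 : p+1-i = (p-i)+1 := by omega
    rw [e1, e2, Nat.choose_succ_succ, mul_add]
  rw [hmain]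
  have hcol : ∑ i ∈ Finset.range (p+1), ∑ j ∈ Finset.range (q+2),
        A i j * Nat.choose (p+q+1-i-j) (p+1-i)
      = ∑ i ∈ Finset.range (p+1), ∑ j ∈ Finset.range (q+1),
        A i j * Nat.choose (p+q+1-i-j) (p+1-i) := by
    apply Finset.sum_congr rfl
    intro i hi
    simp only [Finset.mem_range] at hi
    rw [Finset.sum_range_succ]
    have hz : Nat.choose (p+q+1-i-(q+1)) (p+1-i) = 0 := by
      apply Nat.choose_eq_zero_of_lt; omega
    simp [hz]
  rw [hcol]
  have hrhs2 : ∑ i ∈ Finset.range (p+2), ∑ j ∈ Finset.range (q+1),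
        A i j * Nat.choose (p+q+1-i-j) (p+1-i)
      = (∑ i ∈ Finset.range (p+1), ∑ j ∈ Finset.range (q+1),
          A i j * Nat.choose (p+q+1-i-j) (p+1-i))
      + ∑ j ∈ Finset.range (q+1), A (p+1) j := by
    rw [Finset.sum_range_succ]
    congr 1
    apply Finset.sum_congr rfl
    intro j hj
    simp only [Finset.mem_range] at hj
    have h2 : p+1-(p+1) = 0 := by omega
    simp [h2]
  rw [hrhs2]
  ring

theorem L_double_sum (L : ℕ → ℕ → ℕ)
    (h0 : ∀ p q, p = 0 ∨ q = 0 → L p q = 0)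
    (hrec : ∀ p q, 1 ≤ p → 1 ≤ q →
        L p q = L (p - 1) q + L p (q - 1)
          + Int.natAbs ((p : ℤ) - (q : ℤ)) * Nat.choose (p + q - 2) (p - 1)) :
    ∀ p q : ℕ, L (p + 1) (q + 1)
      = ∑ i ∈ Finset.range (p + 1), ∑ j ∈ Finset.range (q + 1),
          Int.natAbs ((i : ℤ) - (j : ℤ)) * Nat.choose (i + j) i
            * Nat.choose (p + q - i - j) (p - i) := by
  set A : ℕ → ℕ → ℕ := fun i j => Int.natAbs ((i : ℤ) - (j : ℤ)) * Nat.choose (i + j) i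
    with hA
  suffices h : ∀ n p q, p + q = n → L (p + 1) (q + 1)
      = ∑ i ∈ Finset.range (p + 1), ∑ j ∈ Finset.range (q + 1),
          A i j * Nat.choose (p + q - i - j) (p - i) by
    intro p q
    rw [h (p + q) p q rfl]
  intro n
  induction n using Nat.strong_induction_on with
  | _ n ih =>
    intro p q hpq
    have hL := hrec (p + 1) (q + 1) (by omega) (by omega)
    simp only [Nat.add_sub_cancel] at hL
    have habs : Int.natAbs ((↑(p+1) : ℤ) - (↑(q+1) : ℤ))
        = Int.natAbs ((p : ℤ) - (q : ℤ)) := by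
      congr 1; push_cast; ring
    have hch : p + 1 + (q + 1) - 2 = p + q := by omega
    rw [habs, hch] at hL
    match p, q with
    | 0, 0 =>
      have h1 : L 0 1 = 0 := h0 0 1 (Or.inl rfl)
      have h2 : L 1 0 = 0 := h0 1 0 (Or.inr rfl)
      rw [hL, h1, h2]
      simp [hA]
    | 0, (q' + 1) =>
      have h1 : L 0 (q' + 2) = 0 := h0 0 (q' + 2) (Or.inl rfl)
      have h2 : L 1 (q' + 1) = ∑ i ∈ Finset.range 1, ∑ j ∈ Finset.range (q' + 1),
          A i j * Nat.choose (0 + q' - i - j) (0 - i) := ih q' (by omega) 0 q' (by omega)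
      have hR : ∑ i ∈ Finset.range 1, ∑ j ∈ Finset.range (q' + 2),
            A i j * Nat.choose (0 + (q' + 1) - i - j) (0 - i)
          = (∑ i ∈ Finset.range 1, ∑ j ∈ Finset.range (q' + 1),
            A i j * Nat.choose (0 + q' - i - j) (0 - i)) + A 0 (q' + 1) := by
        simp only [Finset.sum_range_one]
        rw [Finset.sum_range_succ]
        congr 1
        · apply Finset.sum_congr rfl
          intro j hj
          simp only [Finset.mem_range] at hj
          congr 1
          have e1 : 0 + (q' + 1) - 0 - j = (0 + q' - 0 - j) + 1 := by omega
          rw [e1]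
          simp
        · have e2 : 0 + (q' + 1) - 0 - (q' + 1) = 0 := by omega
          rw [e2]
          simp
      rw [hL, h1, h2, hR, zero_add]
    | (p' + 1), 0 =>
      have h1 : L (p' + 2) 0 = 0 := h0 (p' + 2) 0 (Or.inr rfl)
      have h2 : L (p' + 1) 1 = ∑ i ∈ Finset.range (p' + 1), ∑ j ∈ Finset.range 1,
          A i j * Nat.choose (p' + 0 - i - j) (p' - i) := ih p' (by omega) p' 0 (by omega)
      have hR : ∑ i ∈ Finset.range (p' + 2), ∑ j ∈ Finset.range 1,
            A i j * Nat.choose (p' + 1 + 0 - i - j) (p' + 1 - i)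
          = (∑ i ∈ Finset.range (p' + 1), ∑ j ∈ Finset.range 1,
            A i j * Nat.choose (p' + 0 - i - j) (p' - i)) + A (p' + 1) 0 := by
        rw [Finset.sum_range_succ]
        congr 1
        · apply Finset.sum_congr rfl
          intro i hi
          simp only [Finset.mem_range] at hi
          simp only [Finset.sum_range_one]
          congr 1
          have e1 : p' + 1 + 0 - i - 0 = (p' - i) + 1 := by omega
          have e2 : p' + 1 - i = (p' - i) + 1 := by omega
          have e3 : p' + 0 - i - 0 = p' - i := by omega
          rw [e1, e2, e3, Nat.choose_self, Nat.choose_self]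
        · simp only [Finset.sum_range_one]
          have e1 : p' + 1 + 0 - (p' + 1) - 0 = 0 := by omega
          have e2 : p' + 1 - (p' + 1) = 0 := by omega
          rw [e1, e2]
          simp
      rw [hL, h1, h2, hR, add_zero]
    | (p' + 1), (q' + 1) =>
      have h1 : L (p' + 1) (q' + 2) = ∑ i ∈ Finset.range (p' + 1),
          ∑ j ∈ Finset.range (q' + 2),
          A i j * Nat.choose (p' + (q'+1) - i - j) (p' - i) :=
        ih (p' + (q' + 1)) (by omega) p' (q' + 1) rfl
      have h2 : L (p' + 2) (q' + 1) = ∑ i ∈ Finset.range (p' + 2),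
          ∑ j ∈ Finset.range (q' + 1),
          A i j * Nat.choose ((p'+1) + q' - i - j) ((p'+1) - i) :=
        ih ((p' + 1) + q') (by omega) (p' + 1) q' rfl
      rw [hL, h1, h2]
      have hk := key_split A p' q'
      have e1 : ∀ i j : ℕ, p' + 1 + (q' + 1) - i - j = p' + q' + 2 - i - j := by
        intro i j; omega
      have e2 : ∀ i j : ℕ, p' + (q' + 1) - i - j = p' + q' + 1 - i - j := by
        intro i j; omega
      have e3 : ∀ i j : ℕ, p' + 1 + q' - i - j = p' + q' + 1 - i - j := by
        intro i j; omega
      have e4 : p' + 1 + 1 - 1 = p' + 1 := by omega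
      simp only [e1, e2, e3]
      rw [hk]
end

section
/- For all integers p \ge 1, \sum_{i=0}^p \sum_{j=0}^p |i-j| \binom{i+j}{i} \binom{2p-i-j}{p-i} = 2^{2p-1} p. -/
open Finset


-- L1: Pascal step for partial row sums
lemma L1 (N n : ℕ) :
    ∑ k ∈ range (n + 1), (N + 1).choose k
      = (∑ k ∈ range (n + 1), N.choose k) + ∑ k ∈ range n, N.choose k := by
  rw [Finset.sum_range_succ' (fun k => (N + 1).choose k) n,
      Finset.sum_range_succ' (fun k => N.choose k) n]
  simp only [Nat.choose_succ_succ, Nat.choose_zero_right]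
  rw [Finset.sum_add_distrib]
  ring

-- L2a: certificate for central binomial convolution
lemma L2a (j k : ℕ) :
    (j + k + 1) * (Nat.centralBinom j * Nat.centralBinom (k + 1))
      + (j + 1) * (Nat.centralBinom (j + 1) * Nat.centralBinom k)
    = j * (Nat.centralBinom j * Nat.centralBinom (k + 1))
      + 4 * (j + k + 1) * (Nat.centralBinom j * Nat.centralBinom k) := by
  have h1 := Nat.succ_mul_centralBinom_succ k
  have h2 := Nat.succ_mul_centralBinom_succ j
  zify at h1 h2 ⊢
  linear_combination (Nat.centralBinom j : ℤ) * h1 + (Nat.centralBinom k : ℤ) * h2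

-- L2: central binomial convolution
lemma L2 (m : ℕ) :
    ∑ j ∈ range (m + 1), Nat.centralBinom j * Nat.centralBinom (m - j) = 4 ^ m := by
  induction m with
  | zero => simp [Nat.centralBinom]
  | succ m ih =>
    set c : ℕ → ℤ := fun n => (Nat.centralBinom n : ℤ) with hc
    have step : ∀ j ∈ range (m + 1),
        ((m : ℤ) + 1) * (c j * c (m + 1 - j))
        = ((m : ℤ) + 1) * (4 * (c j * c (m - j)))
          + ((fun j : ℕ => (j : ℤ) * (c j * c (m + 1 - j))) j
            - (fun j : ℕ => (j : ℤ) * (c j * c (m + 1 - j))) (j + 1)) := by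
      intro j hj
      have hjm : j ≤ m := by simpa [Nat.lt_succ_iff] using hj
      have h1 : m + 1 - j = (m - j) + 1 := by omega
      have h1' : m + 1 - (j + 1) = m - j := by omega
      have h2 := L2a j (m - j)
      have h3 : j + (m - j) + 1 = m + 1 := by omega
      rw [h3] at h2
      zify at h2
      simp only [h1, h1', hc]
      push_cast
      linarith [h2]
    have tel0 := Finset.sum_range_sub'
      (fun j : ℕ => (j : ℤ) * (c j * c (m + 1 - j))) (m + 1)
    have h4 : ∑ j ∈ range (m + 1), ((m : ℤ) + 1) * (c j * c (m + 1 - j))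
        = (∑ j ∈ range (m + 1), ((m : ℤ) + 1) * (4 * (c j * c (m - j))))
          + ((fun j : ℕ => (j : ℤ) * (c j * c (m + 1 - j))) 0
            - (fun j : ℕ => (j : ℤ) * (c j * c (m + 1 - j))) (m + 1)) := by
      rw [← tel0, ← Finset.sum_add_distrib]
      exact Finset.sum_congr rfl step
    simp only [Nat.cast_zero, zero_mul, Nat.sub_self, zero_sub] at h4
    have hc0 : c 0 = 1 := by simp [hc, Nat.centralBinom_zero]
    rw [hc0] at h4
    have key : ((m : ℤ) + 1) * (∑ j ∈ range (m + 1 + 1), c j * c (m + 1 - j))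
        = ((m : ℤ) + 1) * (4 * ∑ j ∈ range (m + 1), c j * c (m - j)) := by
      rw [Finset.sum_range_succ, mul_add, Finset.mul_sum, h4, Nat.sub_self, hc0]
      have e : ((m : ℤ) + 1) * (4 * ∑ j ∈ range (m + 1), c j * c (m - j))
          = ∑ j ∈ range (m + 1), ((m : ℤ) + 1) * (4 * (c j * c (m - j))) := by
        rw [Finset.mul_sum, Finset.mul_sum]
      rw [e]
      push_cast
      ring
    have hm : ((m : ℤ) + 1) ≠ 0 := by positivity
    have key2 := mul_left_cancel₀ hm key
    have ihz : ∑ j ∈ range (m + 1), c j * c (m - j) = (4 : ℤ) ^ m := by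
      simp only [hc]
      exact_mod_cast congrArg (Nat.cast : ℕ → ℤ) ih
    rw [ihz] at key2
    have : (∑ j ∈ range (m + 1 + 1), c j * c (m + 1 - j)) = (4 : ℤ) ^ (m + 1) := by
      rw [key2]; ring
    simp only [hc] at this
    exact_mod_cast this



lemma L3 (m d e : ℕ) :
    ∑ j ∈ range (m + 1), (2 * j + d).choose j * (2 * (m - j) + e).choose (m - j)
      = ∑ k ∈ range (m + 1), (2 * m + d + e + 1).choose k := by
  induction m generalizing d e with
  | zero => simp
  | succ m ih =>
    -- e-step recurrence at level m+1
    have erec : ∀ d e : ℕ,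
        ∑ j ∈ range (m + 2), (2 * j + d).choose j * (2 * (m + 1 - j) + (e + 1)).choose (m + 1 - j)
        = (∑ j ∈ range (m + 2), (2 * j + d).choose j * (2 * (m + 1 - j) + e).choose (m + 1 - j))
          + ∑ j ∈ range (m + 1), (2 * j + d).choose j * (2 * (m - j) + (e + 2)).choose (m - j) := by
      intro d e
      rw [Finset.sum_range_succ (fun j => (2 * j + d).choose j * (2 * (m + 1 - j) + (e + 1)).choose (m + 1 - j)) (m + 1),
          Finset.sum_range_succ (fun j => (2 * j + d).choose j * (2 * (m + 1 - j) + e).choose (m + 1 - j)) (m + 1)]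
      have mid : ∀ j ∈ range (m + 1),
          (2 * j + d).choose j * (2 * (m + 1 - j) + (e + 1)).choose (m + 1 - j)
          = (2 * j + d).choose j * (2 * (m + 1 - j) + e).choose (m + 1 - j)
            + (2 * j + d).choose j * (2 * (m - j) + (e + 2)).choose (m - j) := by
        intro j hj
        have h1 : m + 1 - j = (m - j) + 1 := by
          have := mem_range.1 hj; omega
        rw [h1]
        have h2 : 2 * ((m - j) + 1) + (e + 1) = (2 * (m - j) + (e + 2)) + 1 := by ring
        rw [h2, Nat.choose_succ_succ]
        have h3 : 2 * (m - j) + (e + 2) = 2 * ((m - j) + 1) + e := by ring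
        rw [h3]
        ring
      rw [Finset.sum_congr rfl mid, Finset.sum_add_distrib]
      simp [Nat.sub_self]
      ring
    -- d-step recurrence at level m+1
    have drec : ∀ d e : ℕ,
        ∑ j ∈ range (m + 2), (2 * j + (d + 1)).choose j * (2 * (m + 1 - j) + e).choose (m + 1 - j)
        = (∑ j ∈ range (m + 2), (2 * j + d).choose j * (2 * (m + 1 - j) + e).choose (m + 1 - j))
          + ∑ j ∈ range (m + 1), (2 * j + (d + 2)).choose j * (2 * (m - j) + e).choose (m - j) := by
      intro d e
      rw [Finset.sum_range_succ' (fun j => (2 * j + (d + 1)).choose j * (2 * (m + 1 - j) + e).choose (m + 1 - j)) (m + 1),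
          Finset.sum_range_succ' (fun j => (2 * j + d).choose j * (2 * (m + 1 - j) + e).choose (m + 1 - j)) (m + 1)]
      have mid : ∀ i ∈ range (m + 1),
          (2 * (i + 1) + (d + 1)).choose (i + 1) * (2 * (m + 1 - (i + 1)) + e).choose (m + 1 - (i + 1))
          = (2 * (i + 1) + d).choose (i + 1) * (2 * (m + 1 - (i + 1)) + e).choose (m + 1 - (i + 1))
            + (2 * i + (d + 2)).choose i * (2 * (m - i) + e).choose (m - i) := by
        intro i hi
        have h0 : m + 1 - (i + 1) = m - i := by omega
        have pas : (2 * (i + 1) + (d + 1)).choose (i + 1)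
            = (2 * (i + 1) + d).choose (i + 1) + (2 * i + (d + 2)).choose i := by
          have h2 : 2 * (i + 1) + (d + 1) = (2 * (i + 1) + d) + 1 := by ring
          rw [h2, Nat.choose_succ_succ]
          have h4 : (2 * (i + 1) + d).choose i = (2 * i + (d + 2)).choose i := by
            congr 1; ring
          rw [h4]; exact Nat.add_comm _ _
        rw [h0, pas, add_mul]
      rw [Finset.sum_congr rfl mid, Finset.sum_add_distrib]
      simp
      ring
    -- base: d = 0, all e
    have P0 : ∀ e : ℕ,
        ∑ j ∈ range (m + 2), (2 * j + 0).choose j * (2 * (m + 1 - j) + e).choose (m + 1 - j)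
        = ∑ k ∈ range (m + 2), (2 * (m + 1) + 0 + e + 1).choose k := by
      intro e
      induction e with
      | zero =>
        have l2 := L2 (m + 1)
        simp only [Nat.centralBinom] at l2
        have : ∀ j ∈ range (m + 2),
            (2 * j + 0).choose j * (2 * (m + 1 - j) + 0).choose (m + 1 - j)
            = (2 * j).choose j * (2 * (m + 1 - j)).choose (m + 1 - j) := by
          intro j hj; norm_num
        rw [Finset.sum_congr rfl this, l2]
        have h4 : 2 * (m + 1) + 0 + 0 + 1 = 2 * (m + 1) + 1 := by ring
        rw [h4, Nat.sum_range_choose_halfway (m + 1)]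
      | succ e ihe =>
        rw [erec 0 e, ihe, ih 0 (e + 2)]
        have h5 : 2 * (m + 1) + 0 + (e + 1) + 1 = (2 * (m + 1) + 0 + e + 1) + 1 := by ring
        have h6 : 2 * m + 0 + (e + 2) + 1 = 2 * (m + 1) + 0 + e + 1 := by ring
        rw [h5, h6, L1 (2 * (m + 1) + 0 + e + 1) (m + 1)]
    -- all d, all e
    have Pd : ∀ d e : ℕ,
        ∑ j ∈ range (m + 2), (2 * j + d).choose j * (2 * (m + 1 - j) + e).choose (m + 1 - j)
        = ∑ k ∈ range (m + 2), (2 * (m + 1) + d + e + 1).choose k := by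
      intro d
      induction d with
      | zero => exact P0
      | succ d ihd =>
        intro e
        rw [drec d e, ihd e, ih (d + 2) e]
        have h5 : 2 * (m + 1) + (d + 1) + e + 1 = (2 * (m + 1) + d + e + 1) + 1 := by ring
        have h6 : 2 * m + (d + 2) + e + 1 = 2 * (m + 1) + d + e + 1 := by ring
        rw [h5, h6, L1 (2 * (m + 1) + d + e + 1) (m + 1)]
    exact Pd d e

-- triangle swap
lemma L4 (n : ℕ) (F : ℕ → ℕ → ℕ) :
    ∑ j ∈ range n, ∑ d ∈ range (n - j), F j d
      = ∑ d ∈ range n, ∑ j ∈ range (n - d), F j d := by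
  have h1 : ∀ j ∈ range n, ∑ d ∈ range (n - j), F j d
      = ∑ d ∈ range n, if j + d < n then F j d else 0 := by
    intro j hj
    rw [← Finset.sum_filter]
    apply Finset.sum_congr _ (fun _ _ => rfl)
    ext d; simp only [mem_filter, mem_range]; omega
  have h2 : ∀ d ∈ range n, ∑ j ∈ range (n - d), F j d
      = ∑ j ∈ range n, if j + d < n then F j d else 0 := by
    intro d hd
    rw [← Finset.sum_filter]
    apply Finset.sum_congr _ (fun _ _ => rfl)
    ext j; simp only [mem_filter, mem_range]; omega
  rw [Finset.sum_congr rfl h1, Finset.sum_congr rfl h2, Finset.sum_comm]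

-- second moment pieces
lemma Mom (p : ℕ) (hp : 1 ≤ p) :
    ∑ k ∈ range (2 * p + 2), k * (2 * p + 1 - k) * (2 * p + 1).choose k
      = (2 * p + 1) * (2 * p) * 2 ^ (2 * p - 1) := by
  rw [Finset.sum_range_succ' (fun k => k * (2 * p + 1 - k) * (2 * p + 1).choose k) (2 * p + 1)]
  simp only [Nat.zero_mul, Nat.mul_zero, zero_mul, add_zero]
  have pw : ∀ i ∈ range (2 * p + 1),
      (i + 1) * (2 * p + 1 - (i + 1)) * (2 * p + 1).choose (i + 1)
      = (2 * p + 1) * (2 * p) * (2 * p - 1).choose i := by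
    intro i hi
    have hi' : i ≤ 2 * p := by have := mem_range.1 hi; omega
    have e1 : 2 * p + 1 - (i + 1) = 2 * p - i := by omega
    have e2 : (2 * p + 1) * (2 * p).choose i = (2 * p + 1).choose (i + 1) * (i + 1) := by
      have := Nat.add_one_mul_choose_eq (2 * p) i
      simpa using this
    have e3 : (2 * p - 1).choose i * (2 * p) = (2 * p).choose i * (2 * p - i) := by
      have := Nat.choose_mul_succ_eq (2 * p - 1) i
      have h2 : 2 * p - 1 + 1 = 2 * p := by omega
      rw [h2] at this
      have h3 : 2 * p - i = 2 * p - 1 + 1 - i := by omega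
      exact this
    rw [e1]
    calc (i + 1) * (2 * p - i) * (2 * p + 1).choose (i + 1)
        = ((2 * p + 1).choose (i + 1) * (i + 1)) * (2 * p - i) := by ring
      _ = ((2 * p + 1) * (2 * p).choose i) * (2 * p - i) := by rw [← e2]
      _ = (2 * p + 1) * ((2 * p).choose i * (2 * p - i)) := by ring
      _ = (2 * p + 1) * ((2 * p - 1).choose i * (2 * p)) := by rw [← e3]
      _ = (2 * p + 1) * (2 * p) * (2 * p - 1).choose i := by ring
  rw [Finset.sum_congr rfl pw, ← Finset.mul_sum]
  congr 1
  have hr : 2 * p + 1 = (2 * p - 1 + 1) + 1 := by omega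
  rw [hr, Finset.sum_range_succ, Nat.choose_succ_self, add_zero, Nat.sum_range_choose]

lemma Half (p : ℕ) :
    ∑ k ∈ range (2 * p + 2), ((2 * p + 1 : ℤ) - 2 * k) ^ 2 * ((2 * p + 1).choose k : ℤ)
      = 2 * ∑ k ∈ range (p + 1), ((2 * p + 1 : ℤ) - 2 * k) ^ 2 * ((2 * p + 1).choose k : ℤ) := by
  have hsplit : 2 * p + 2 = (p + 1) + (p + 1) := by ring
  rw [hsplit, Finset.sum_range_add]
  have refl := Finset.sum_range_reflect
    (fun x : ℕ => ((2 * p + 1 : ℤ) - 2 * ((p + 1 + x : ℕ) : ℤ)) ^ 2 * ((2 * p + 1).choose (p + 1 + x) : ℤ)) (p + 1)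
  rw [← refl]
  have pw : ∀ j ∈ range (p + 1),
      ((2 * p + 1 : ℤ) - 2 * ((p + 1 + (p + 1 - 1 - j) : ℕ) : ℤ)) ^ 2 * ((2 * p + 1).choose (p + 1 + (p + 1 - 1 - j)) : ℤ)
      = ((2 * p + 1 : ℤ) - 2 * j) ^ 2 * ((2 * p + 1).choose j : ℤ) := by
    intro j hj
    have hjp : j ≤ p := by have := mem_range.1 hj; omega
    have e1 : p + 1 + (p + 1 - 1 - j) = 2 * p + 1 - j := by omega
    rw [e1]
    have e2 : (2 * p + 1).choose (2 * p + 1 - j) = (2 * p + 1).choose j :=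
      Nat.choose_symm (by omega)
    rw [e2]
    have e3 : ((2 * p + 1 - j : ℕ) : ℤ) = 2 * p + 1 - j := by
      push_cast [Nat.cast_sub (by omega : j ≤ 2 * p + 1)]; ring
    rw [e3]
    ring_nf
  rw [Finset.sum_congr rfl pw]
  ring

lemma Full (p : ℕ) (hp : 1 ≤ p) :
    ∑ k ∈ range (2 * p + 2), ((2 * p + 1 : ℤ) - 2 * k) ^ 2 * ((2 * p + 1).choose k : ℤ)
      = (2 * (p : ℤ) + 1) * 2 ^ (2 * p + 1) := by
  have pw : ∀ k ∈ range (2 * p + 2),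
      ((2 * p + 1 : ℤ) - 2 * k) ^ 2 * ((2 * p + 1).choose k : ℤ)
      = (2 * p + 1) ^ 2 * ((2 * p + 1).choose k : ℤ)
        - 4 * (↑(k * (2 * p + 1 - k) * (2 * p + 1).choose k) : ℤ) := by
    intro k hk
    have hk' : k ≤ 2 * p + 1 := by have := mem_range.1 hk; omega
    have e3 : ((2 * p + 1 - k : ℕ) : ℤ) = 2 * p + 1 - k := by
      push_cast [Nat.cast_sub hk']; ring
    push_cast
    rw [e3]
    ring
  have hch : ∑ k ∈ range (2 * p + 2), (2 * p + 1).choose k = 2 ^ (2 * p + 1) :=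
    Nat.sum_range_choose (2 * p + 1)
  have hA : ∑ x ∈ range (2 * p + 2), (2 * (p : ℤ) + 1) ^ 2 * ((2 * p + 1).choose x : ℤ)
      = (2 * (p : ℤ) + 1) ^ 2 * ((2 : ℤ) ^ (2 * p + 1)) := by
    rw [← Finset.mul_sum, ← Nat.cast_sum, hch]
    push_cast
    ring
  have hB : ∑ x ∈ range (2 * p + 2), (4 : ℤ) * ↑(x * (2 * p + 1 - x) * (2 * p + 1).choose x)
      = 4 * (((2 * p + 1) * (2 * p) * 2 ^ (2 * p - 1) : ℕ) : ℤ) := by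
    rw [← Finset.mul_sum, ← Nat.cast_sum, Mom p hp]
  rw [Finset.sum_congr rfl pw, Finset.sum_sub_distrib, hA, hB]
  have h2 : (2 : ℤ) ^ (2 * p + 1) = 4 * 2 ^ (2 * p - 1) := by
    have e : 2 * p + 1 = (2 * p - 1) + 2 := by omega
    rw [e]; ring
  push_cast
  rw [h2]
  ring

lemma L7 (p : ℕ) (hp : 1 ≤ p) :
    ∑ j ∈ range (p + 1), j * (j + 1) * (2 * p + 1).choose (p - j) = 2 ^ (2 * p - 1) * p := by
  have key : (4 : ℤ) * ↑(∑ j ∈ range (p + 1), j * (j + 1) * (2 * p + 1).choose (p - j))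
      = 2 * (p : ℤ) * 4 ^ p := by
    have refl := Finset.sum_range_reflect
      (fun k => ((2 * p + 1 : ℤ) - 2 * k) ^ 2 * ((2 * p + 1).choose k : ℤ)
        - ((2 * p + 1).choose k : ℤ)) (p + 1)
    have pw : ∀ j ∈ range (p + 1),
        (fun k => ((2 * p + 1 : ℤ) - 2 * k) ^ 2 * ((2 * p + 1).choose k : ℤ)
          - ((2 * p + 1).choose k : ℤ)) (p + 1 - 1 - j)
        = 4 * (↑(j * (j + 1) * (2 * p + 1).choose (p - j)) : ℤ) := by
      intro j hj
      have hjp : j ≤ p := by have := mem_range.1 hj; omega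
      simp only
      have e0 : p + 1 - 1 - j = p - j := by omega
      rw [e0]
      have e3 : ((p - j : ℕ) : ℤ) = p - j := by
        push_cast [Nat.cast_sub hjp]; ring
      push_cast
      rw [e3]
      ring
    rw [Finset.sum_congr rfl pw] at refl
    have halfmoment : ∑ k ∈ range (p + 1), ((2 * p + 1 : ℤ) - 2 * k) ^ 2 * ((2 * p + 1).choose k : ℤ)
        = (2 * (p : ℤ) + 1) * 4 ^ p := by
      have h := Half p
      rw [Full p hp] at h
      have : (2 : ℤ) ^ (2 * p + 1) = 2 * 4 ^ p := by
        rw [pow_succ, pow_mul]; ring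
      rw [this] at h
      linarith
    have halfsum : ∑ k ∈ range (p + 1), ((2 * p + 1).choose k : ℤ) = 4 ^ p := by
      exact_mod_cast congrArg (Nat.cast : ℕ → ℤ) (Nat.sum_range_choose_halfway p)
    rw [Finset.sum_sub_distrib, halfmoment, halfsum] at refl
    rw [← Finset.mul_sum] at refl
    rw [Nat.cast_sum]
    linarith [refl]
  have rhs4 : (4 : ℤ) * ((2 ^ (2 * p - 1) * p : ℕ) : ℤ) = 2 * p * 4 ^ p := by
    push_cast
    have : (2 : ℤ) ^ (2 * p - 1) * 4 = 2 * 4 ^ p := by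
      have e : 2 * p - 1 + 2 = 2 * p + 1 := by omega
      have : (2 : ℤ) ^ (2 * p - 1) * 4 = 2 ^ (2 * p - 1 + 2) := by ring
      rw [this, e, pow_succ, pow_mul]; ring
    nlinarith [this]
  have : (4 : ℤ) * ((∑ j ∈ range (p + 1), j * (j + 1) * (2 * p + 1).choose (p - j) : ℕ) : ℤ)
      = (4 : ℤ) * ((2 ^ (2 * p - 1) * p : ℕ) : ℤ) := by
    rw [rhs4, ← key]
  have h4 : (4 : ℤ) ≠ 0 := by norm_num
  exact_mod_cast mul_left_cancel₀ h4 this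




theorem diag_double_sum (p : ℕ) (hp : 1 ≤ p) :
    ∑ i ∈ Finset.range (p + 1), ∑ j ∈ Finset.range (p + 1),
        Int.natAbs ((i : ℤ) - (j : ℤ)) * Nat.choose (i + j) i
          * Nat.choose (2 * p - i - j) (p - i)
    = 2 ^ (2 * p - 1) * p := by
  -- Step A: split |i-j| = (i-j) + (j-i) in ℕ
  have stepA : ∑ i ∈ range (p + 1), ∑ j ∈ range (p + 1),
      Int.natAbs ((i : ℤ) - (j : ℤ)) * Nat.choose (i + j) i * Nat.choose (2 * p - i - j) (p - i)
      = (∑ i ∈ range (p + 1), ∑ j ∈ range (p + 1),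
          (i - j) * Nat.choose (i + j) i * Nat.choose (2 * p - i - j) (p - i))
        + ∑ i ∈ range (p + 1), ∑ j ∈ range (p + 1),
          (j - i) * Nat.choose (i + j) i * Nat.choose (2 * p - i - j) (p - i) := by
    rw [← Finset.sum_add_distrib]
    apply Finset.sum_congr rfl; intro i _
    rw [← Finset.sum_add_distrib]
    apply Finset.sum_congr rfl; intro j _
    have : Int.natAbs ((i : ℤ) - (j : ℤ)) = (i - j) + (j - i) := by omega
    rw [this]
    ring
  -- Step B : second sum equals first
  have stepB : (∑ i ∈ range (p + 1), ∑ j ∈ range (p + 1),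
        (j - i) * Nat.choose (i + j) i * Nat.choose (2 * p - i - j) (p - i))
      = ∑ i ∈ range (p + 1), ∑ j ∈ range (p + 1),
        (i - j) * Nat.choose (i + j) i * Nat.choose (2 * p - i - j) (p - i) := by
    rw [Finset.sum_comm]
    apply Finset.sum_congr rfl; intro x hx
    apply Finset.sum_congr rfl; intro y hy
    have hxp : x ≤ p := by have := mem_range.1 hx; omega
    have hyp : y ≤ p := by have := mem_range.1 hy; omega
    have c1 : (y + x).choose y = (x + y).choose x := by
      have h := Nat.choose_symm (n := x + y) (k := y) (Nat.le_add_left y x)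
      have e : x + y - y = x := by omega
      rw [e] at h
      rw [add_comm y x, ← h]
    have c2 : (2 * p - y - x).choose (p - y) = (2 * p - x - y).choose (p - x) := by
      have h := Nat.choose_symm (n := 2 * p - x - y) (k := p - y) (by omega)
      have e : 2 * p - x - y - (p - y) = p - x := by omega
      rw [e] at h
      have e2 : 2 * p - y - x = 2 * p - x - y := by omega
      rw [e2, ← h]
    rw [c1, c2]
  rw [stepA, stepB, ← two_mul]
  -- Step D : reindex inner sum by difference
  have stepD : (∑ i ∈ range (p + 1), ∑ j ∈ range (p + 1),
        (i - j) * Nat.choose (i + j) i * Nat.choose (2 * p - i - j) (p - i))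
      = ∑ j ∈ range (p + 1), ∑ x ∈ range ((p + 1) - j),
          x * Nat.choose (2 * j + x) (j + x) * Nat.choose (2 * p - 2 * j - x) (p - j - x) := by
    rw [Finset.sum_comm]
    apply Finset.sum_congr rfl; intro j hj
    have hjp : j ≤ p := by have := mem_range.1 hj; omega
    have hsplit : p + 1 = j + ((p + 1) - j) := by omega
    rw [hsplit, Finset.sum_range_add]
    have z1 : ∑ i ∈ range j,
        (i - j) * Nat.choose (i + j) i * Nat.choose (2 * p - i - j) (p - i) = 0 := by
      apply Finset.sum_eq_zero
      intro i hi
      have : i - j = 0 := by have := mem_range.1 hi; omega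
      simp [this]
    rw [z1, zero_add]
    rw [show j + (p + 1 - j) - j = p + 1 - j from by omega]
    apply Finset.sum_congr rfl; intro x hx
    have hx' : x ≤ p - j := by have := mem_range.1 hx; omega
    have e1 : j + x - j = x := by omega
    have e2 : j + x + j = 2 * j + x := by omega
    have e3 : 2 * p - (j + x) - j = 2 * p - 2 * j - x := by omega
    have e4 : p - (j + x) = p - j - x := by omega
    rw [e1, e2, e3, e4]
  rw [stepD, L4 (p + 1)]
  -- Step E : inner sum via L3
  have stepE : ∀ d ∈ range (p + 1),
      (∑ j ∈ range ((p + 1) - d),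
        d * Nat.choose (2 * j + d) (j + d) * Nat.choose (2 * p - 2 * j - d) (p - j - d))
      = ∑ k ∈ range ((p + 1) - d), d * Nat.choose (2 * p + 1) k := by
    intro d hd
    have hdp : d ≤ p := by have := mem_range.1 hd; omega
    have hrange : (p + 1) - d = (p - d) + 1 := by omega
    rw [hrange]
    have pointwise : ∀ j ∈ range ((p - d) + 1),
        d * Nat.choose (2 * j + d) (j + d) * Nat.choose (2 * p - 2 * j - d) (p - j - d)
        = d * ((2 * j + d).choose j * (2 * ((p - d) - j) + d).choose ((p - d) - j)) := by
      intro j hj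
      have hj' : j ≤ p - d := by have := mem_range.1 hj; omega
      have c1 : (2 * j + d).choose (j + d) = (2 * j + d).choose j := by
        have h := Nat.choose_symm (n := 2 * j + d) (k := j + d) (by omega)
        have e : 2 * j + d - (j + d) = j := by omega
        rw [e] at h
        rw [← h]
      have c2 : 2 * p - 2 * j - d = 2 * ((p - d) - j) + d := by omega
      have c3 : p - j - d = (p - d) - j := by omega
      rw [c1, c2, c3]
      ring
    rw [Finset.sum_congr rfl pointwise, ← Finset.mul_sum, L3 (p - d) d d]
    have e5 : 2 * (p - d) + d + d + 1 = 2 * p + 1 := by omega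
    rw [e5, Finset.mul_sum]
  rw [Finset.sum_congr rfl stepE, L4 (p + 1)]
  -- Step F/G : Gauss sum and reflect
  have stepF : ∀ k ∈ range (p + 1),
      (∑ d ∈ range ((p + 1) - k), d * Nat.choose (2 * p + 1) k)
      = (∑ d ∈ range ((p + 1) - k), d) * Nat.choose (2 * p + 1) k := by
    intro k _
    rw [Finset.sum_mul]
  rw [Finset.sum_congr rfl stepF]
  have stepG : 2 * ∑ k ∈ range (p + 1),
      (∑ d ∈ range ((p + 1) - k), d) * Nat.choose (2 * p + 1) k
      = ∑ k ∈ range (p + 1), ((p + 1 - k) * (p - k)) * Nat.choose (2 * p + 1) k := by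
    rw [Finset.mul_sum]
    apply Finset.sum_congr rfl; intro k hk
    have hkp : k ≤ p := by have := mem_range.1 hk; omega
    have gauss := Finset.sum_range_id_mul_two ((p + 1) - k)
    have e : (p + 1) - k - 1 = p - k := by omega
    rw [e] at gauss
    calc 2 * ((∑ d ∈ range ((p + 1) - k), d) * Nat.choose (2 * p + 1) k)
        = ((∑ d ∈ range ((p + 1) - k), d) * 2) * Nat.choose (2 * p + 1) k := by ring
      _ = ((p + 1 - k) * (p - k)) * Nat.choose (2 * p + 1) k := by rw [gauss]
  rw [stepG]
  have stepH : ∑ k ∈ range (p + 1), ((p + 1 - k) * (p - k)) * Nat.choose (2 * p + 1) k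
      = ∑ j ∈ range (p + 1), j * (j + 1) * (2 * p + 1).choose (p - j) := by
    rw [← Finset.sum_range_reflect
      (fun k => ((p + 1 - k) * (p - k)) * Nat.choose (2 * p + 1) k) (p + 1)]
    apply Finset.sum_congr rfl; intro j hj
    have hjp : j ≤ p := by have := mem_range.1 hj; omega
    have e1 : p + 1 - 1 - j = p - j := by omega
    have e2 : p + 1 - (p - j) = j + 1 := by omega
    have e3 : p - (p - j) = j := by omega
    simp only [e1, e2, e3]
    ring
  rw [stepH, L7 p hp]
end

section
/- For all integers r \ge 0 and s \ge 1, \sum_{j=0}^{r} 2j \binom{2r}{r-j} \binom{2s}{s+j} = (rs/(r+s)) \binom{2r}{r} \binom{2s}{s}. -/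
lemma cast_choose_step (n k : ℕ) :
    ((k : ℚ) + 1) * (n.choose (k + 1) : ℚ) = ((n : ℚ) - k) * (n.choose k : ℚ) := by
  rcases le_or_gt k n with h | h
  · have h1 : n.choose (k + 1) * (k + 1) = n.choose k * (n - k) :=
      Nat.choose_succ_right_eq n k
    have h2 := congrArg (Nat.cast : ℕ → ℚ) h1
    push_cast [h] at h2
    linarith
  · rw [Nat.choose_eq_zero_of_lt h, Nat.choose_eq_zero_of_lt (by omega)]
    push_cast; ring

theorem telescope_even (r s : ℕ) (hs : 1 ≤ s) :
    ∑ j ∈ Finset.range (r + 1),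
        2 * (j : ℚ) * (Nat.choose (2 * r) (r - j)) * (Nat.choose (2 * s) (s + j))
    = ((r : ℚ) * (s : ℚ) / ((r : ℚ) + (s : ℚ)))
        * (Nat.choose (2 * r) r) * (Nat.choose (2 * s) s) := by
  have hs' : (0 : ℚ) < s := by exact_mod_cast hs
  have hrs : (r : ℚ) + s ≠ 0 := by positivity
  set f : ℕ → ℚ := fun j =>
    ((r : ℚ) + j) * ((s : ℚ) + j) / ((r : ℚ) + s) *
      (Nat.choose (2 * r) (r + j)) * (Nat.choose (2 * s) (s + j)) with hf
  have key : ∀ j : ℕ,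
      2 * (j : ℚ) * (Nat.choose (2 * r) (r + j)) * (Nat.choose (2 * s) (s + j))
        = f j - f (j + 1) := by
    intro j
    have e1 := cast_choose_step (2 * r) (r + j)
    have e2 := cast_choose_step (2 * s) (s + j)
    simp only [hf]
    have hA : r + (j + 1) = r + j + 1 := by omega
    have hB : s + (j + 1) = s + j + 1 := by omega
    rw [hA, hB]
    push_cast at e1 e2 ⊢
    field_simp
    linear_combination ((s : ℚ) + j + 1) * ((Nat.choose (2 * s) (s + j + 1) : ℚ)) * e1 +
      ((r : ℚ) - j) * ((Nat.choose (2 * r) (r + j) : ℚ)) * e2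
  have hrw : ∀ j ∈ Finset.range (r + 1),
      2 * (j : ℚ) * (Nat.choose (2 * r) (r - j)) * (Nat.choose (2 * s) (s + j))
        = f j - f (j + 1) := by
    intro j hj
    have hj' : j ≤ r := by simpa using Nat.lt_succ_iff.mp (Finset.mem_range.mp hj)
    have hsym : Nat.choose (2 * r) (r - j) = Nat.choose (2 * r) (r + j) := by
      have : r - j = 2 * r - (r + j) := by omega
      rw [this, Nat.choose_symm (by omega)]
    rw [hsym]; exact key j
  rw [Finset.sum_congr rfl hrw, Finset.sum_range_sub' f (r + 1)]
  have h0 : f (r + 1) = 0 := by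
    simp only [hf]
    rw [Nat.choose_eq_zero_of_lt (by omega)]
    push_cast; ring
  rw [h0, hf]
  push_cast
  ring
end

section
/- For all integers r \ge 0 and s \ge 1, \sum_{j=0}^{r} (2j+1) \binom{2r+1}{r-j} \binom{2s-1}{s+j} = ((r+1)s/(r+s)) \binom{2r+1}{r} \binom{2s-1}{s-1}, provided r+s \ge 1. -/
private def gfun (r s : ℕ) (j : ℕ) : ℚ :=
  ((r:ℚ)+1+j)*((s:ℚ)+j)*(Nat.choose (2*r+1) (r+1+j))*(Nat.choose (2*s-1) (s+j))

private lemma key (r s j : ℕ) (hs : 1 ≤ s) (hj : j ≤ r) :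
    (2*(j:ℚ)+1) * (Nat.choose (2*r+1) (r-j)) * (Nat.choose (2*s-1) (s+j)) * ((r:ℚ)+s)
    = gfun r s j - gfun r s (j+1) := by
  have hsym : Nat.choose (2*r+1) (r-j) = Nat.choose (2*r+1) (r+1+j) := by
    rw [show r - j = 2*r+1 - (r+1+j) by omega, Nat.choose_symm (by omega)]
  rw [hsym]
  unfold gfun
  by_cases hjs : j + 1 ≤ s
  · have h1 : Nat.choose (2*r+1) (r+1+j+1) * (r+1+j+1)
        = Nat.choose (2*r+1) (r+1+j) * (r-j) := by
      rw [Nat.choose_succ_right_eq]; congr 1; omega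
    have h2 : Nat.choose (2*s-1) (s+j+1) * (s+j+1)
        = Nat.choose (2*s-1) (s+j) * (s-1-j) := by
      rw [Nat.choose_succ_right_eq]; congr 1; omega
    have h1' : (Nat.choose (2*r+1) (r+1+j+1) : ℚ) * ((r:ℚ)+1+j+1)
        = (Nat.choose (2*r+1) (r+1+j) : ℚ) * ((r:ℚ)-j) := by
      have := congrArg (fun n : ℕ => (n:ℚ)) h1
      push_cast [Nat.cast_sub hj] at this
      linarith [this]
    have h2' : (Nat.choose (2*s-1) (s+j+1) : ℚ) * ((s:ℚ)+j+1)
        = (Nat.choose (2*s-1) (s+j) : ℚ) * ((s:ℚ)-1-j) := by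
      have := congrArg (fun n : ℕ => (n:ℚ)) h2
      push_cast [Nat.cast_sub (show j ≤ s - 1 by omega), Nat.cast_sub hs] at this
      linarith [this]
    rw [show r+1+(j+1) = r+1+j+1 by omega, show s+(j+1) = s+j+1 by omega]
    push_cast
    linear_combination ((Nat.choose (2*s-1) (s+j+1) : ℚ)) * ((s:ℚ)+j+1) * h1'
      + ((Nat.choose (2*r+1) (r+1+j) : ℚ)) * ((r:ℚ)-j) * h2'
  · have hb : Nat.choose (2*s-1) (s+j) = 0 := Nat.choose_eq_zero_of_lt (by omega)
    have hb' : Nat.choose (2*s-1) (s+(j+1)) = 0 := Nat.choose_eq_zero_of_lt (by omega)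
    simp [hb, hb']

theorem telescope_odd (r s : ℕ) (hs : 1 ≤ s) :
    ∑ j ∈ Finset.range (r + 1),
        (2 * (j : ℚ) + 1) * (Nat.choose (2 * r + 1) (r - j))
          * (Nat.choose (2 * s - 1) (s + j))
    = (((r : ℚ) + 1) * (s : ℚ) / ((r : ℚ) + (s : ℚ)))
        * (Nat.choose (2 * r + 1) r) * (Nat.choose (2 * s - 1) (s - 1)) := by
  have hne : ((r:ℚ) + s) ≠ 0 := by
    have h1 : (1:ℚ) ≤ (s:ℚ) := by exact_mod_cast hs
    have h2 : (0:ℚ) ≤ (r:ℚ) := Nat.cast_nonneg r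
    intro h; linarith
  have hsum : ∑ j ∈ Finset.range (r+1), (gfun r s j - gfun r s (j+1))
      = gfun r s 0 - gfun r s (r+1) := Finset.sum_range_sub' _ _
  have hS : (∑ j ∈ Finset.range (r + 1),
        (2 * (j : ℚ) + 1) * (Nat.choose (2 * r + 1) (r - j))
          * (Nat.choose (2 * s - 1) (s + j))) * ((r:ℚ)+s)
      = gfun r s 0 - gfun r s (r+1) := by
    rw [← hsum, Finset.sum_mul]
    refine Finset.sum_congr rfl fun j hj => ?_
    exact key r s j hs (by simp only [Finset.mem_range] at hj; omega)
  have hend : gfun r s (r+1) = 0 := by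
    unfold gfun
    rw [show Nat.choose (2*r+1) (r+1+(r+1)) = 0 from Nat.choose_eq_zero_of_lt (by omega)]
    push_cast; ring
  have hg0 : gfun r s 0 = ((r:ℚ)+1)*(s:ℚ)*(Nat.choose (2*r+1) r)*(Nat.choose (2*s-1) (s-1)) := by
    unfold gfun
    have e1 : Nat.choose (2*r+1) (r+1+0) = Nat.choose (2*r+1) r := by
      rw [show r+1+0 = 2*r+1-r by omega]; exact Nat.choose_symm (by omega)
    have e2 : Nat.choose (2*s-1) (s+0) = Nat.choose (2*s-1) (s-1) := by
      rw [show s+0 = 2*s-1-(s-1) by omega]; exact Nat.choose_symm (by omega)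
    rw [e1, e2]; push_cast; ring
  have hfin : (∑ j ∈ Finset.range (r + 1),
        (2 * (j : ℚ) + 1) * (Nat.choose (2 * r + 1) (r - j))
          * (Nat.choose (2 * s - 1) (s + j))) * ((r:ℚ)+s)
      = ((r:ℚ)+1)*(s:ℚ)*(Nat.choose (2*r+1) r)*(Nat.choose (2*s-1) (s-1)) := by
    rw [hS, hend, sub_zero, hg0]
  field_simp
  linear_combination hfin
end
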